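/- arXiv:math/0107043 — 7 statements merged into one kernel-verified Lean document; each statement's English description precedes it below -/
import Mathlib

section
/- Let x and y be two points on the unit circle in ℂ and let Q_n be defined by Q_0 = Q_1 = 1 and Q_{n+1}(z) = Q_n(z) + z^{n+1} Q_{n-1}(z). Then for all integers n ≥ 0, |Q_n(x) - Q_n(y)| ≤ n² φ^n |x - y|, where φ = (1+√5)/2. -/
/-!
On the unit circle the recurrence gives `‖Q (n+2)‖ ≤ ‖Q (n+1)‖ + ‖Q n‖`, so `‖Q n‖ ≤ φ ^ n`.
The difference `D n = Qx n - Qy n` satisfies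
`D (n+2) = D (n+1) + x ^ (n+2) * D n + (x ^ (n+2) - y ^ (n+2)) * Qy n`, and
`‖x ^ m - y ^ m‖ ≤ m * ‖x - y‖` on the unit circle. Hence `‖D n‖` obeys the Fibonacci recurrence
with forcing term `(n+2) φ ^ n ‖x - y‖`, which `n ^ 2 φ ^ n ‖x - y‖` dominates since `φ ^ 2 = φ + 1`.
-/

noncomputable def phi : ℝ := (1 + Real.sqrt 5) / 2

open Real goldenRatio

lemma phi_eq_goldenRatio : phi = φ := rfl

lemma le_goldenRatio_pow {a : ℕ → ℝ} (h0 : a 0 ≤ 1) (h1 : a 1 ≤ φ)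
    (hrec : ∀ n, a (n + 2) ≤ a (n + 1) + a n) (n : ℕ) : a n ≤ φ ^ n := by
  induction n using Nat.twoStepInduction with
  | zero => simpa using h0
  | one => simpa using h1
  | more n ih₀ ih₁ =>
    calc a (n + 2) ≤ φ ^ (n + 1) + φ ^ n := (hrec n).trans (add_le_add ih₁ ih₀)
      _ = φ ^ (n + 2) := by linarith [goldenRatio_pow_sub_goldenRatio_pow n]

lemma le_sq_mul_goldenRatio_pow_mul {a : ℕ → ℝ} {c : ℝ} (hc : 0 ≤ c) (h0 : a 0 ≤ 0)
    (h1 : a 1 ≤ φ * c) (hrec : ∀ n, a (n + 2) ≤ a (n + 1) + a n + (n + 2) * φ ^ n * c)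
    (n : ℕ) : a n ≤ n ^ 2 * φ ^ n * c := by
  induction n using Nat.twoStepInduction with
  | zero => simpa using h0
  | one => simpa using h1
  | more n ih₀ ih₁ =>
    have hφc : 0 ≤ φ ^ n * c := by positivity
    have hφ : φ ^ (n + 2) = φ ^ n * φ + φ ^ n := by
      linarith [goldenRatio_pow_sub_goldenRatio_pow n, pow_succ φ n]
    have hn : (0 : ℝ) ≤ n := n.cast_nonneg
    -- after dividing by `φ ^ n * c`: `(n+1)² φ + n² + (n+2) ≤ (n+2)² (φ + 1)`
    calc a (n + 2) ≤ (n + 1 : ℕ) ^ 2 * φ ^ (n + 1) * c + n ^ 2 * φ ^ n * c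
          + (n + 2) * φ ^ n * c := (hrec n).trans (by gcongr)
      _ ≤ (n + 2 : ℕ) ^ 2 * φ ^ (n + 2) * c := by
        rw [hφ, pow_succ φ n]
        push_cast
        nlinarith [mul_nonneg hn (mul_nonneg hφc goldenRatio_pos.le), mul_nonneg hn hφc,
          mul_nonneg hφc goldenRatio_pos.le]

section Continuant

variable {R : Type*} [SeminormedRing R] [NormOneClass R]

lemma norm_pow_le_one {x : R} (hx : ‖x‖ ≤ 1) (n : ℕ) : ‖x ^ n‖ ≤ 1 :=
  (norm_pow_le x n).trans (pow_le_one₀ (norm_nonneg x) hx)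

lemma norm_pow_sub_pow_le {x y : R} (hx : ‖x‖ ≤ 1) (hy : ‖y‖ ≤ 1) (n : ℕ) :
    ‖x ^ n - y ^ n‖ ≤ n * ‖x - y‖ := by
  induction n with
  | zero => simp
  | succ n ih =>
    calc ‖x ^ (n + 1) - y ^ (n + 1)‖ = ‖x ^ n * (x - y) + (x ^ n - y ^ n) * y‖ := by
          simp only [mul_sub, sub_mul, ← pow_succ, sub_add_sub_cancel]
      _ ≤ ‖x ^ n‖ * ‖x - y‖ + ‖x ^ n - y ^ n‖ * ‖y‖ :=
        (norm_add_le _ _).trans (add_le_add (norm_mul_le _ _) (norm_mul_le _ _))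
      _ ≤ 1 * ‖x - y‖ + n * ‖x - y‖ * 1 := by
        gcongr
        exact norm_pow_le_one hx n
      _ = (n + 1 : ℕ) * ‖x - y‖ := by push_cast; ring

lemma norm_le_goldenRatio_pow {x : R} (hx : ‖x‖ ≤ 1) {Q : ℕ → R} (hQ0 : Q 0 = 1)
    (hQ1 : Q 1 = 1) (hQrec : ∀ n, Q (n + 2) = Q (n + 1) + x ^ (n + 2) * Q n) (n : ℕ) :
    ‖Q n‖ ≤ φ ^ n := by
  refine le_goldenRatio_pow (a := fun k => ‖Q k‖) (by simp [hQ0])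
    (by simp [hQ1, one_lt_goldenRatio.le]) (fun n => ?_) n
  calc ‖Q (n + 2)‖ ≤ ‖Q (n + 1)‖ + ‖x ^ (n + 2)‖ * ‖Q n‖ :=
        hQrec n ▸ (norm_add_le _ _).trans (add_le_add le_rfl (norm_mul_le _ _))
    _ ≤ ‖Q (n + 1)‖ + 1 * ‖Q n‖ := by gcongr; exact norm_pow_le_one hx _
    _ = ‖Q (n + 1)‖ + ‖Q n‖ := by rw [one_mul]

end Continuant

/-- For `x, y` on the unit circle, `|Q_n(x) - Q_n(y)| ≤ n² φ^n |x - y|`. -/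
theorem stmt3 (x y : ℂ) (hx : ‖x‖ = 1) (hy : ‖y‖ = 1)
    (Qx Qy : ℕ → ℂ)
    (hQx0 : Qx 0 = 1) (hQx1 : Qx 1 = 1)
    (hQxrec : ∀ n : ℕ, Qx (n + 2) = Qx (n + 1) + x ^ (n + 2) * Qx n)
    (hQy0 : Qy 0 = 1) (hQy1 : Qy 1 = 1)
    (hQyrec : ∀ n : ℕ, Qy (n + 2) = Qy (n + 1) + y ^ (n + 2) * Qy n) :
    ∀ n : ℕ, ‖Qx n - Qy n‖ ≤
      (n : ℝ) ^ 2 * phi ^ n * ‖x - y‖ := by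
  rw [phi_eq_goldenRatio]
  refine le_sq_mul_goldenRatio_pow_mul (norm_nonneg _) (by simp [hQx0, hQy0])
    (by simp [hQx1, hQy1]; positivity) fun n => ?_
  have hdecomp : Qx (n + 2) - Qy (n + 2) = (Qx (n + 1) - Qy (n + 1)) + x ^ (n + 2) * (Qx n - Qy n)
      + (x ^ (n + 2) - y ^ (n + 2)) * Qy n := by
    rw [hQxrec, hQyrec]; ring
  have hpow : ‖x ^ (n + 2) - y ^ (n + 2)‖ ≤ (n + 2 : ℕ) * ‖x - y‖ :=
    norm_pow_sub_pow_le hx.le hy.le _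
  have hQy : ‖Qy n‖ ≤ φ ^ n := norm_le_goldenRatio_pow hy.le hQy0 hQy1 hQyrec n
  calc ‖Qx (n + 2) - Qy (n + 2)‖
      ≤ ‖Qx (n + 1) - Qy (n + 1)‖ + ‖x ^ (n + 2) * (Qx n - Qy n)‖
        + ‖(x ^ (n + 2) - y ^ (n + 2)) * Qy n‖ := hdecomp ▸ norm_add₃_le
    _ = ‖Qx (n + 1) - Qy (n + 1)‖ + ‖Qx n - Qy n‖ + ‖x ^ (n + 2) - y ^ (n + 2)‖ * ‖Qy n‖ := by
      rw [norm_mul, norm_mul, norm_pow, hx, one_pow, one_mul]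
    _ ≤ ‖Qx (n + 1) - Qy (n + 1)‖ + ‖Qx n - Qy n‖ + (n + 2 : ℕ) * ‖x - y‖ * φ ^ n := by
      gcongr
    _ = _ := by push_cast; ring
end

section
/- Let f : ℕ → ℝ satisfy f(n) > 1 for all n and Σ_{n=1}^∞ 1/f(n) < ∞. Then the set of t ∈ (0,1) (irrational, with continued fraction partial quotients a_k(t)) such that a_k(t) > f(k) for infinitely many k has Lebesgue measure zero. -/
/-- The Gauss map `x ↦ {1/x}`. -/
noncomputable def gaussMap (x : ℝ) : ℝ := Int.fract (1 / x)

/-- The `k`-th partial quotient `a_k(t)` (for `k ≥ 1`) of the regular continued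
fraction of an irrational `t ∈ (0,1)`. -/
noncomputable def cfPQ (t : ℝ) (k : ℕ) : ℤ := ⌊1 / gaussMap^[k - 1] t⌋

noncomputable def cfDenAux (t : ℝ) : ℕ → ℤ × ℤ
  | 0 => (1, cfPQ t 1)
  | n + 1 => ((cfDenAux t n).2, cfPQ t (n + 2) * (cfDenAux t n).2 + (cfDenAux t n).1)

/-- The denominator `d_n(t)` of the `n`-th convergent. -/
noncomputable def cfDen (t : ℝ) (n : ℕ) : ℤ := (cfDenAux t n).1

noncomputable def cfNumAux (t : ℝ) : ℕ → ℤ × ℤ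
  | 0 => (0, 1)
  | n + 1 => ((cfNumAux t n).2, cfPQ t (n + 2) * (cfNumAux t n).2 + (cfNumAux t n).1)

/-- The numerator `c_n(t)` of the `n`-th convergent. -/
noncomputable def cfNum (t : ℝ) (n : ℕ) : ℤ := (cfNumAux t n).1

open MeasureTheory

/-!
The Gauss measure `dx / (1 + x)` on `(0, 1)` is invariant under the Gauss map `T` and lies
between `1/2` and `1` times Lebesgue measure there. Since `a_k(t) > c` forces
`T^[k-1] t < 1 / c`, the set where `a_k > f k` has Lebesgue measure at most `2 / f k`; these
bounds are summable, so Borel–Cantelli concludes. Invariance is checked on the rays `(a, ∞)`: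
for `0 ≤ a ≤ 1` the preimage of `(a, 1)` is the disjoint union of the branches
`(1 / (n + 2), 1 / (n + 1 + a))`, whose Gauss measures telescope to `log 2 - log (1 + a)`.
-/

open Set Filter Topology

noncomputable def gaussMeasure : Measure ℝ :=
  (volume.restrict (Ioo 0 1)).withDensity fun x => ENNReal.ofReal (1 + x)⁻¹

lemma measurable_gaussMap : Measurable gaussMap := by
  unfold gaussMap; fun_prop

lemma gaussMeasure_compl_Ioo : gaussMeasure (Ioo 0 1)ᶜ = 0 :=
  withDensity_absolutelyContinuous _ _ (Measure.restrict_apply_self _ _ ▸ by simp)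

lemma gaussMeasure_le_volume (s : Set ℝ) : gaussMeasure s ≤ volume (s ∩ Ioo 0 1) := by
  have hle : gaussMeasure ≤ volume.restrict (Ioo 0 1) := by
    conv_rhs => rw [← withDensity_one (μ := volume.restrict (Ioo 0 1))]
    refine withDensity_mono ?_
    filter_upwards [ae_restrict_mem measurableSet_Ioo] with x hx
    exact ENNReal.ofReal_le_one.mpr (inv_le_one_of_one_le₀ (by linarith [hx.1]))
  exact (hle s).trans (Measure.restrict_apply' measurableSet_Ioo).le

lemma volume_le_two_mul_gaussMeasure (s : Set ℝ) :
    volume (s ∩ Ioo 0 1) ≤ 2 * gaussMeasure s := by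
  have hle : (2 : ENNReal)⁻¹ • volume.restrict (Ioo 0 1) ≤ gaussMeasure := by
    rw [← withDensity_const]
    refine withDensity_mono ?_
    filter_upwards [ae_restrict_mem measurableSet_Ioo] with x hx
    rw [← ENNReal.ofReal_ofNat, ← ENNReal.ofReal_inv_of_pos two_pos]
    exact ENNReal.ofReal_le_ofReal (inv_anti₀ (by linarith [hx.1]) (by linarith [hx.2]))
  calc volume (s ∩ Ioo 0 1) = 2 * ((2 : ENNReal)⁻¹ • volume.restrict (Ioo 0 1)) s := by
        rw [Measure.smul_apply, smul_eq_mul, ← mul_assoc, ENNReal.mul_inv_cancel two_ne_zero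
          ENNReal.ofNat_ne_top, one_mul, Measure.restrict_apply' measurableSet_Ioo]
    _ ≤ 2 * gaussMeasure s := mul_le_mul_right (hle s) 2

instance : IsFiniteMeasure gaussMeasure :=
  ⟨(gaussMeasure_le_volume univ).trans_lt (by simp)⟩

lemma gaussMeasure_Ioo {c d : ℝ} (hc : 0 ≤ c) (hcd : c ≤ d) (hd : d ≤ 1) :
    gaussMeasure (Ioo c d) = ENNReal.ofReal (Real.log (1 + d) - Real.log (1 + c)) := by
  have hsub : Ioo c d ⊆ Ioo 0 1 := Ioo_subset_Ioo hc hd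
  have hint : IntegrableOn (fun x : ℝ => (1 + x)⁻¹) (Ioc c d) := by
    refine (ContinuousOn.integrableOn_Icc ?_).mono_set Ioc_subset_Icc_self
    exact (continuousOn_const.add continuousOn_id).inv₀ fun x hx =>
      (show (0 : ℝ) < 1 + x by linarith [hx.1]).ne'
  rw [gaussMeasure, withDensity_apply _ measurableSet_Ioo,
    Measure.restrict_restrict measurableSet_Ioo, inter_eq_left.mpr hsub,
    Measure.restrict_congr_set Ioo_ae_eq_Ioc, ← ofReal_integral_eq_lintegral_ofReal hint
      (ae_restrict_of_forall_mem measurableSet_Ioc fun x hx =>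
        inv_nonneg.mpr (by linarith [hx.1])),
    ← intervalIntegral.integral_of_le hcd, intervalIntegral.integral_comp_add_left (fun x => x⁻¹),
    integral_inv_of_pos (by linarith) (by linarith), Real.log_div (by linarith) (by linarith)]

lemma Monotone.hasSum_sub_succ {G : ℕ → ℝ} {l : ℝ} (hG : Monotone G)
    (hl : Tendsto G atTop (𝓝 l)) : HasSum (fun n => G (n + 1) - G n) (l - G 0) := by
  rw [hasSum_iff_tendsto_nat_of_nonneg fun n => sub_nonneg.mpr (hG n.le_succ)]
  simp_rw [Finset.sum_range_sub]
  exact hl.sub_const _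

lemma preimage_gaussMap_Ioi_inter_Ioo {a : ℝ} (ha : 0 ≤ a) :
    gaussMap ⁻¹' Ioi a ∩ Ioo 0 1 = ⋃ n : ℕ, Ioo ((n + 2 : ℝ)⁻¹) ((n + 1 + a)⁻¹) := by
  ext x
  simp only [mem_inter_iff, mem_preimage, mem_Ioi, mem_Ioo, mem_iUnion, gaussMap, one_div]
  constructor
  · rintro ⟨hfract, hx0, hx1⟩
    have hm : 1 ≤ ⌊x⁻¹⌋ := Int.le_floor.mpr (by simpa using (one_le_inv₀ hx0).mpr hx1.le)
    obtain ⟨n, hn⟩ : ∃ n : ℕ, ⌊x⁻¹⌋ = n + 1 := ⟨(⌊x⁻¹⌋ - 1).toNat, by omega⟩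
    have hlo : x⁻¹ < n + 2 := by
      have := Int.lt_floor_add_one x⁻¹
      rw [hn] at this; push_cast at this; linarith
    have hhi : n + 1 + a < x⁻¹ := by
      rw [Int.fract, hn] at hfract; push_cast at hfract; linarith
    exact ⟨n, (inv_lt_comm₀ hx0 (by positivity)).mp hlo,
      (lt_inv_comm₀ (by positivity) hx0).mp hhi⟩
  · rintro ⟨n, hlo, hhi⟩
    have hn : (0 : ℝ) < n + 1 + a := by positivity
    have hx0 : 0 < x := (inv_pos.mpr (by positivity)).trans hlo
    have hy1 : n + 1 + a < x⁻¹ := (lt_inv_comm₀ hx0 hn).mp hhi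
    have hy2 : x⁻¹ < n + 2 := (inv_lt_comm₀ (by positivity) hx0).mp hlo
    have hfl : ⌊x⁻¹⌋ = n + 1 :=
      Int.floor_eq_iff.mpr ⟨by push_cast; linarith, by push_cast; linarith⟩
    refine ⟨?_, hx0, hhi.trans_le (inv_le_one_of_one_le₀ (by linarith))⟩
    rw [Int.fract, hfl]; push_cast; linarith

lemma hasSum_log_one_add_inv_sub {a : ℝ} (ha0 : 0 ≤ a) (ha1 : a ≤ 1) :
    HasSum (fun n : ℕ => Real.log (1 + (n + 1 + a)⁻¹) - Real.log (1 + (n + 2 : ℝ)⁻¹))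
      (Real.log 2 - Real.log (1 + a)) := by
  set G : ℕ → ℝ := fun n => Real.log (n + 1 + a) - Real.log (n + 2)
  have hdiff : ∀ n : ℕ, G (n + 1) - G n =
      Real.log (1 + (n + 1 + a)⁻¹) - Real.log (1 + (n + 2 : ℝ)⁻¹) := by
    intro n
    have e1 : 1 + ((n : ℝ) + 1 + a)⁻¹ = (n + 1 + 1 + a) / (n + 1 + a) := by field_simp; ring
    have e2 : 1 + ((n : ℝ) + 2)⁻¹ = (n + 1 + 2) / (n + 2) := by field_simp; ring
    simp only [G, e1, e2]
    push_cast
    rw [Real.log_div (by positivity) (by positivity), Real.log_div (by positivity) (by positivity)]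
    ring
  have hmono : Monotone G := monotone_nat_of_le_succ fun n => by
    rw [← sub_nonneg, hdiff, sub_nonneg]
    have : ((n : ℝ) + 2)⁻¹ ≤ (n + 1 + a)⁻¹ := inv_anti₀ (by positivity) (by linarith)
    exact Real.log_le_log (by positivity) (by linarith)
  have hlim : Tendsto G atTop (𝓝 0) := by
    refine ((Real.tendsto_log_comp_add_sub_log (a - 1)).comp
      (tendsto_natCast_atTop_atTop.atTop_add (tendsto_const_nhds (x := 2)))).congr fun n => ?_
    simp only [Function.comp, G]
    ring_nf
  have hG0 : 0 - G 0 = Real.log 2 - Real.log (1 + a) := by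
    simp only [G]
    norm_num
  simpa only [hdiff, hG0] using hmono.hasSum_sub_succ hlim

lemma pairwise_disjoint_Ioo_inv {a : ℝ} (ha : 0 ≤ a) :
    Pairwise (Function.onFun Disjoint fun n : ℕ => Ioo ((n + 2 : ℝ)⁻¹) ((n + 1 + a)⁻¹)) := by
  refine (pairwise_disjoint_on _).mpr fun m n hmn => disjoint_left.mpr fun x hm hn => ?_
  have hmn' : (m : ℝ) + 1 ≤ n := by exact_mod_cast hmn
  have : ((n : ℝ) + 1 + a)⁻¹ ≤ ((m : ℝ) + 2)⁻¹ := inv_anti₀ (by positivity) (by linarith)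
  linarith [hm.1, hn.2]

lemma gaussMeasure_iUnion_Ioo_inv {a : ℝ} (ha0 : 0 ≤ a) (ha1 : a ≤ 1) :
    gaussMeasure (⋃ n : ℕ, Ioo ((n + 2 : ℝ)⁻¹) ((n + 1 + a)⁻¹)) =
      ENNReal.ofReal (Real.log 2 - Real.log (1 + a)) := by
  have hinv : ∀ n : ℕ, ((n : ℝ) + 2)⁻¹ ≤ (n + 1 + a)⁻¹ :=
    fun n => inv_anti₀ (by positivity) (by linarith)
  have hle : ∀ n : ℕ, ((n : ℝ) + 1 + a)⁻¹ ≤ 1 := fun n => inv_le_one_of_one_le₀ (by linarith)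
  rw [measure_iUnion (pairwise_disjoint_Ioo_inv ha0) fun _ => measurableSet_Ioo,
    ← (hasSum_log_one_add_inv_sub ha0 ha1).tsum_eq,
    ENNReal.ofReal_tsum_of_nonneg (fun n => sub_nonneg.mpr
      (Real.log_le_log (by positivity) (by linarith [hinv n])))
      (hasSum_log_one_add_inv_sub ha0 ha1).summable]
  exact tsum_congr fun n => gaussMeasure_Ioo (by positivity) (hinv n) (hle n)

lemma gaussMeasure_preimage_Ioi (a : ℝ) :
    gaussMeasure (gaussMap ⁻¹' Ioi a) = gaussMeasure (Ioi a) := by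
  rcases lt_or_ge a 0 with ha0 | ha0
  · have hpre : gaussMap ⁻¹' Ioi a = univ :=
      eq_univ_of_forall fun x => ha0.trans_le (Int.fract_nonneg _)
    rw [hpre, ← measure_inter_conull (s := Ioi a) gaussMeasure_compl_Ioo,
      inter_eq_right.mpr (Ioo_subset_Ioi_self.trans (Ioi_subset_Ioi ha0.le)),
      ← measure_inter_conull gaussMeasure_compl_Ioo, univ_inter]
  rcases le_or_gt a 1 with ha1 | ha1
  · rw [← measure_inter_conull gaussMeasure_compl_Ioo, preimage_gaussMap_Ioi_inter_Ioo ha0,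
      gaussMeasure_iUnion_Ioo_inv ha0 ha1, ← measure_inter_conull gaussMeasure_compl_Ioo,
      Ioi_inter_Ioo, max_eq_left ha0, gaussMeasure_Ioo ha0 ha1 le_rfl]
    norm_num
  · have hpre : gaussMap ⁻¹' Ioi a = ∅ :=
      eq_empty_of_forall_notMem fun x hx => (Int.fract_lt_one _).not_ge (ha1.le.trans hx.le)
    have hIoi : Ioi a ∩ Ioo 0 1 = ∅ :=
      eq_empty_of_forall_notMem fun x hx => by linarith [hx.1.out, hx.2.2]
    rw [hpre, measure_empty, eq_comm, ← nonpos_iff_eq_zero]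
    simpa [hIoi] using gaussMeasure_le_volume (Ioi a)

lemma measurePreserving_gaussMap : MeasurePreserving gaussMap gaussMeasure gaussMeasure := by
  refine ⟨measurable_gaussMap, ext_of_generate_finite (range Ioi)
    (borel_eq_generateFrom_Ioi ℝ) isPiSystem_Ioi ?_ ?_⟩
  · rintro _ ⟨a, rfl⟩
    rw [Measure.map_apply measurable_gaussMap measurableSet_Ioi, gaussMeasure_preimage_Ioi]
  · rw [Measure.map_apply measurable_gaussMap MeasurableSet.univ, preimage_univ]

lemma gaussMap_iterate_nonneg {t : ℝ} (ht : 0 ≤ t) : ∀ m, 0 ≤ gaussMap^[m] t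
  | 0 => ht
  | m + 1 => by rw [Function.iterate_succ_apply']; exact Int.fract_nonneg _

lemma volume_setOf_lt_cfPQ_le {c : ℝ} (hc : 0 < c) (k : ℕ) :
    volume {t | t ∈ Ioo (0 : ℝ) 1 ∧ c < cfPQ t k} ≤ 2 * ENNReal.ofReal (1 / c) := by
  have hsub : {t | t ∈ Ioo (0 : ℝ) 1 ∧ c < cfPQ t k} ⊆
      gaussMap^[k - 1] ⁻¹' Ioo 0 (1 / c) ∩ Ioo 0 1 := by
    rintro t ⟨ht, hck⟩
    have hx : 0 ≤ gaussMap^[k - 1] t := gaussMap_iterate_nonneg ht.1.le _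
    have hlt : c < 1 / gaussMap^[k - 1] t := hck.trans_le (Int.floor_le _)
    have hx0 : 0 < gaussMap^[k - 1] t := hx.lt_of_ne fun h => by
      rw [← h, div_zero] at hlt; exact hc.not_gt hlt
    exact ⟨⟨hx0, (lt_one_div hc hx0).mp hlt⟩, ht⟩
  calc volume {t | t ∈ Ioo (0 : ℝ) 1 ∧ c < cfPQ t k}
      ≤ volume (gaussMap^[k - 1] ⁻¹' Ioo 0 (1 / c) ∩ Ioo 0 1) := measure_mono hsub
    _ ≤ 2 * gaussMeasure (gaussMap^[k - 1] ⁻¹' Ioo 0 (1 / c)) :=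
      volume_le_two_mul_gaussMeasure _
    _ = 2 * gaussMeasure (Ioo 0 (1 / c)) := by
      rw [(measurePreserving_gaussMap.iterate _).measure_preimage
        measurableSet_Ioo.nullMeasurableSet]
    _ ≤ 2 * volume (Ioo 0 (1 / c)) :=
      mul_le_mul_right ((gaussMeasure_le_volume _).trans (measure_mono inter_subset_left)) 2
    _ = 2 * ENNReal.ofReal (1 / c) := by rw [Real.volume_Ioo, sub_zero]

/-- Borel–Bernstein type theorem: if `Σ 1/f(n) < ∞` then the set of irrational
`t ∈ (0,1)` with `a_k(t) > f(k)` infinitely often has measure zero. -/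
theorem stmt6 (f : ℕ → ℝ) (hf : ∀ n, 1 < f n)
    (hsum : Summable fun n => 1 / f n) :
    volume {t : ℝ | t ∈ Set.Ioo (0 : ℝ) 1 ∧ Irrational t ∧
      {k : ℕ | 1 ≤ k ∧ f k < (cfPQ t k : ℝ)}.Infinite} = 0 := by
  have hpos : ∀ k, 0 < f k := fun k => one_pos.trans (hf k)
  set s : ℕ → Set ℝ := fun k => {t | t ∈ Ioo (0 : ℝ) 1 ∧ f k < cfPQ t k}
  have hfin : ∑' k, volume (s k) ≠ ⊤ := by
    refine ne_top_of_le_ne_top ?_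
      (ENNReal.tsum_le_tsum fun k => volume_setOf_lt_cfPQ_le (hpos k) k)
    rw [ENNReal.tsum_mul_left,
      ← ENNReal.ofReal_tsum_of_nonneg (fun k => (one_div_pos.mpr (hpos k)).le) hsum]
    exact ENNReal.mul_ne_top ENNReal.ofNat_ne_top ENNReal.ofReal_ne_top
  refine measure_mono_null (fun t ⟨ht, _, hinf⟩ => ?_) (measure_limsup_atTop_eq_zero hfin)
  rw [mem_limsup_iff_frequently_mem]
  exact (Nat.frequently_atTop_iff_infinite.mpr hinf).mono fun k hk => ⟨ht, hk.2⟩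
end

section
/- The set S = {t ∈ (0,1) irrational : a_{i+1}(t) ≥ φ^{d_i(t)} for infinitely many i} has Lebesgue measure zero, where a_i(t) are the partial quotients and d_i(t) the convergent denominators of the continued fraction expansion of t, and φ = (1+√5)/2. -/
open MeasureTheory

/-!
Write `T` for the Gauss map. Since `a_{i+1}(t) = ⌊1 / Tⁱ t⌋` and `d_i(t) ≥ F_{i+1}`, every `t ∈ S`
lies in infinitely many of the sets `E_i = [0,1) ∩ T⁻ⁱ [0, φ^{-F_{i+1}}]`. The inverse branches
`y ↦ 1 / (y + m)` of `T` are `1/m²`-Lipschitz on `[0,1)`, so `λ([0,1) ∩ T⁻¹ A) ≤ ζ(2) λ([0,1) ∩ A)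
≤ 2 λ([0,1) ∩ A)`, whence `λ(E_i) ≤ 2ⁱ φ^{-F_{i+1}}`. This is summable because `F_i → ∞`, and
Borel–Cantelli concludes.
-/

open Set Filter Topology
open scoped ENNReal

lemma one_lt_phi : 1 < phi := Real.one_lt_goldenRatio

lemma phi_pos : 0 < phi := zero_lt_one.trans one_lt_phi

section ContinuedFraction

variable {t : ℝ}

lemma irrational_gaussMap (ht : Irrational t) : Irrational (gaussMap t) := by
  rw [gaussMap, Int.fract, one_div]
  exact ht.inv.sub_intCast _

lemma gaussMap_mem_Ioo (ht : Irrational t) : gaussMap t ∈ Ioo 0 1 :=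
  ⟨(Int.fract_nonneg _).lt_of_ne (irrational_gaussMap ht).ne_zero.symm, Int.fract_lt_one _⟩

lemma irrational_gaussMap_iterate (ht : Irrational t) (i : ℕ) : Irrational (gaussMap^[i] t) :=
  Function.Iterate.rec Irrational ht (fun _ => irrational_gaussMap) i

lemma gaussMap_iterate_mem_Ioo (ht : Irrational t) (h : t ∈ Ioo 0 1) :
    ∀ i, gaussMap^[i] t ∈ Ioo 0 1
  | 0 => h
  | i + 1 => by
    rw [Function.iterate_succ_apply']
    exact gaussMap_mem_Ioo (irrational_gaussMap_iterate ht i)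

lemma one_le_cfPQ (ht : Irrational t) (h : t ∈ Ioo 0 1) (k : ℕ) : 1 ≤ cfPQ t k := by
  obtain ⟨h0, h1⟩ := gaussMap_iterate_mem_Ioo ht h (k - 1)
  rw [cfPQ, Int.le_floor, Int.cast_one, le_div_iff₀ h0]
  linarith

lemma gaussMap_iterate_le_inv_cfPQ (ht : Irrational t) (h : t ∈ Ioo 0 1) (i : ℕ) :
    gaussMap^[i] t ≤ (cfPQ t (i + 1) : ℝ)⁻¹ := by
  have hx := (gaussMap_iterate_mem_Ioo ht h i).1
  have ha : (0 : ℝ) < cfPQ t (i + 1) := by exact_mod_cast one_le_cfPQ ht h (i + 1)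
  rw [le_inv_comm₀ hx ha, ← one_div]
  exact Int.floor_le _

lemma fib_le_cfDenAux (ht : Irrational t) (h : t ∈ Ioo 0 1) (n : ℕ) :
    (Nat.fib (n + 1) : ℤ) ≤ (cfDenAux t n).1 ∧ (Nat.fib (n + 2) : ℤ) ≤ (cfDenAux t n).2 := by
  induction n with
  | zero => simpa [cfDenAux] using one_le_cfPQ ht h 1
  | succ n ih =>
    refine ⟨ih.2, ?_⟩
    have ha := one_le_cfPQ ht h (n + 2)
    have hfib : (Nat.fib (n + 3) : ℤ) = Nat.fib (n + 2) + Nat.fib (n + 1) := by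
      rw [Nat.fib_add_two, add_comm]; push_cast; rfl
    rw [hfib]
    show _ ≤ cfPQ t (n + 2) * (cfDenAux t n).2 + (cfDenAux t n).1
    nlinarith [ih.1, ih.2, (Nat.fib (n + 2)).cast_nonneg (α := ℤ)]

lemma fib_le_cfDen (ht : Irrational t) (h : t ∈ Ioo 0 1) (n : ℕ) :
    (Nat.fib (n + 1) : ℤ) ≤ cfDen t n :=
  (fib_le_cfDenAux ht h n).1

lemma gaussMap_iterate_le_of_zpow_cfDen_le (ht : Irrational t) (h : t ∈ Ioo 0 1) {i : ℕ}
    (hi : phi ^ cfDen t i ≤ (cfPQ t (i + 1) : ℝ)) :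
    gaussMap^[i] t ≤ phi⁻¹ ^ Nat.fib (i + 1) := by
  calc gaussMap^[i] t ≤ (cfPQ t (i + 1) : ℝ)⁻¹ := gaussMap_iterate_le_inv_cfPQ ht h i
    _ ≤ (phi ^ cfDen t i)⁻¹ := inv_anti₀ (zpow_pos phi_pos _) hi
    _ ≤ (phi ^ (Nat.fib (i + 1) : ℤ))⁻¹ :=
        inv_anti₀ (zpow_pos phi_pos _) (zpow_le_zpow_right₀ one_lt_phi.le (fib_le_cfDen ht h i))
    _ = phi⁻¹ ^ Nat.fib (i + 1) := by rw [zpow_natCast, inv_pow]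

end ContinuedFraction

lemma LipschitzOnWith.volume_image_le {f : ℝ → ℝ} {K : NNReal} {s : Set ℝ}
    (hf : LipschitzOnWith K f s) : volume (f '' s) ≤ K * volume s := by
  simpa [← hausdorffMeasure_real] using hf.hausdorffMeasure_image_le zero_le_one

lemma lipschitzOnWith_inv_add {c : ℝ} (hc : 0 < c) :
    LipschitzOnWith (1 / c ^ 2).toNNReal (fun y => (y + c)⁻¹) (Ici 0) := by
  refine LipschitzOnWith.of_dist_le_mul fun x (hx : 0 ≤ x) y (hy : 0 ≤ y) => ?_
  have hxc : 0 < x + c := by linarith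
  have hyc : 0 < y + c := by linarith
  rw [Real.dist_eq, Real.dist_eq, Real.coe_toNNReal _ (by positivity),
    inv_sub_inv hxc.ne' hyc.ne', show y + c - (x + c) = -(x - y) by ring, abs_div, abs_neg,
    abs_of_pos (mul_pos hxc hyc), div_eq_inv_mul, one_div]
  gcongr
  nlinarith

lemma tsum_ofReal_one_div_succ_sq_le_two :
    ∑' m : ℕ, ENNReal.ofReal (1 / ((m : ℝ) + 1) ^ 2) ≤ 2 := by
  have hsum : HasSum (fun m : ℕ => 1 / ((m : ℝ) + 1) ^ 2) (Real.pi ^ 2 / 6) := by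
    simpa using (hasSum_nat_add_iff' 1).mpr hasSum_zeta_two
  rw [← ENNReal.ofReal_tsum_of_nonneg (fun _ => by positivity) hsum.summable, hsum.tsum_eq,
    ← ENNReal.ofReal_ofNat]
  refine ENNReal.ofReal_le_ofReal ?_
  nlinarith [Real.pi_lt_d2, Real.pi_pos]

lemma Ioo_inter_preimage_gaussMap_subset (A : Set ℝ) :
    Ioo 0 1 ∩ gaussMap ⁻¹' A ⊆ ⋃ m : ℕ, (fun y => (y + ((m : ℝ) + 1))⁻¹) '' (Ico 0 1 ∩ A) := by
  rintro x ⟨⟨hx0, hx1⟩, hxA⟩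
  have hn : 1 ≤ ⌊1 / x⌋ := by
    rw [Int.le_floor, Int.cast_one, le_div_iff₀ hx0]
    linarith
  refine mem_iUnion.mpr ⟨(⌊1 / x⌋ - 1).toNat, gaussMap x,
    ⟨⟨Int.fract_nonneg _, Int.fract_lt_one _⟩, hxA⟩, ?_⟩
  have hcast : (((⌊1 / x⌋ - 1).toNat : ℕ) : ℝ) + 1 = ⌊1 / x⌋ := by
    rw [← Int.cast_natCast, Int.toNat_of_nonneg (by omega)]
    push_cast; ring
  change (gaussMap x + ((((⌊1 / x⌋ - 1).toNat : ℕ) : ℝ) + 1))⁻¹ = x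
  rw [hcast, gaussMap, Int.fract_add_floor, one_div, inv_inv]

lemma volume_Ico_inter_preimage_gaussMap_le (A : Set ℝ) :
    volume (Ico 0 1 ∩ gaussMap ⁻¹' A) ≤ 2 * volume (Ico 0 1 ∩ A) := by
  have hlip (m : ℕ) := lipschitzOnWith_inv_add (c := (m : ℝ) + 1) (by positivity)
  calc volume (Ico 0 1 ∩ gaussMap ⁻¹' A)
      = volume (Ioo 0 1 ∩ gaussMap ⁻¹' A) :=
        measure_congr (Ioo_ae_eq_Ico.symm.inter (ae_eq_refl _))
    _ ≤ ∑' m : ℕ, volume ((fun y => (y + ((m : ℝ) + 1))⁻¹) '' (Ico 0 1 ∩ A)) :=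
        (measure_mono (Ioo_inter_preimage_gaussMap_subset A)).trans (measure_iUnion_le _)
    _ ≤ ∑' m : ℕ, ENNReal.ofReal (1 / ((m : ℝ) + 1) ^ 2) * volume (Ico 0 1 ∩ A) :=
        ENNReal.tsum_le_tsum fun m =>
          ((hlip m).mono fun y hy => hy.1.1).volume_image_le
    _ = (∑' m : ℕ, ENNReal.ofReal (1 / ((m : ℝ) + 1) ^ 2)) * volume (Ico 0 1 ∩ A) :=
        ENNReal.tsum_mul_right
    _ ≤ 2 * volume (Ico 0 1 ∩ A) := by gcongr; exact tsum_ofReal_one_div_succ_sq_le_two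

lemma volume_Ico_inter_preimage_gaussMap_iterate_le (A : Set ℝ) (i : ℕ) :
    volume (Ico 0 1 ∩ gaussMap^[i] ⁻¹' A) ≤ 2 ^ i * volume (Ico 0 1 ∩ A) := by
  induction i with
  | zero => simp
  | succ i ih =>
    rw [Function.iterate_succ, preimage_comp, pow_succ', mul_assoc]
    exact (volume_Ico_inter_preimage_gaussMap_le _).trans (by gcongr)

lemma volume_Ico_inter_Iic_le (ε : ℝ) : volume (Ico 0 1 ∩ Iic ε) ≤ ENNReal.ofReal ε := by
  calc volume (Ico 0 1 ∩ Iic ε) ≤ volume (Icc 0 ε) :=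
        measure_mono fun x hx => ⟨hx.1.1, hx.2⟩
    _ = ENNReal.ofReal ε := by rw [Real.volume_Icc, sub_zero]

lemma summable_pow_mul_pow_fib_succ {C r : ℝ} (hC : 0 < C) (hr0 : 0 < r) (hr1 : r < 1) :
    Summable fun i => C ^ i * r ^ Nat.fib (i + 1) := by
  refine summable_of_ratio_test_tendsto_lt_one zero_lt_one
    (Eventually.of_forall fun i => by positivity) ?_
  have hratio (i : ℕ) : ‖C ^ (i + 1) * r ^ Nat.fib (i + 2)‖ / ‖C ^ i * r ^ Nat.fib (i + 1)‖
      = C * r ^ Nat.fib i := by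
    rw [Real.norm_of_nonneg (by positivity), Real.norm_of_nonneg (by positivity),
      Nat.fib_add_two, pow_add, pow_succ]
    field_simp
    ring
  have hfib : Tendsto Nat.fib atTop atTop :=
    tendsto_atTop_mono' atTop (eventually_ge_atTop 5 |>.mono fun _ => Nat.le_fib_self) tendsto_id
  have hlim := ((tendsto_pow_atTop_nhds_zero_of_lt_one hr0.le hr1).comp hfib).const_mul C
  rw [mul_zero] at hlim
  exact hlim.congr fun i => (hratio i).symm

/-- The set `S = {t ∈ (0,1) : a_{i+1}(t) ≥ φ^{d_i(t)} infinitely often}` has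
Lebesgue measure zero. -/
theorem stmt7 :
    volume {t : ℝ | t ∈ Set.Ioo (0 : ℝ) 1 ∧ Irrational t ∧
      {i : ℕ | phi ^ (cfDen t i) ≤ (cfPQ t (i + 1) : ℝ)}.Infinite} = 0 := by
  have hphi := phi_pos
  set E : ℕ → Set ℝ := fun i => Ico 0 1 ∩ gaussMap^[i] ⁻¹' Iic (phi⁻¹ ^ Nat.fib (i + 1))
  have hsub : {t : ℝ | t ∈ Set.Ioo (0 : ℝ) 1 ∧ Irrational t ∧
      {i : ℕ | phi ^ (cfDen t i) ≤ (cfPQ t (i + 1) : ℝ)}.Infinite} ⊆ limsup E atTop := by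
    rintro t ⟨h, ht, hinf⟩
    rw [mem_limsup_iff_frequently_mem, Nat.frequently_atTop_iff_infinite]
    exact hinf.mono fun i hi =>
      ⟨Ioo_subset_Ico_self h, gaussMap_iterate_le_of_zpow_cfDen_le ht h hi⟩
  have hE (i : ℕ) : volume (E i) ≤ ENNReal.ofReal (2 ^ i * phi⁻¹ ^ Nat.fib (i + 1)) := by
    rw [ENNReal.ofReal_mul (by positivity), ENNReal.ofReal_pow zero_le_two, ENNReal.ofReal_ofNat]
    exact (volume_Ico_inter_preimage_gaussMap_iterate_le _ i).trans
      (by gcongr; exact volume_Ico_inter_Iic_le _)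
  have hsum := summable_pow_mul_pow_fib_succ two_pos
    (inv_pos.2 hphi) (inv_lt_one_of_one_lt₀ one_lt_phi)
  refine measure_mono_null hsub (measure_limsup_atTop_eq_zero ?_)
  refine ne_top_of_le_ne_top ?_ (ENNReal.tsum_le_tsum hE)
  rw [← ENNReal.ofReal_tsum_of_nonneg (fun _ => by positivity) hsum]
  exact ENNReal.ofReal_ne_top
end

section
/- Let t be the irrational number with continued fraction expansion [0; a_1, a_2, ...] where a_i is a tower of i twos with an i on top (a_1 = 2, a_2 = 2^(2^2), a_3 = 2^(2^(2^3)), ...), and let d_i denote the convergent denominators. Then for all i ≥ 1, a_{i+1} ≥ 2^{d_i}. -/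
/-- `tw k m` is a tower of `k` twos with `m` on top. -/
def tw : ℕ → ℕ → ℕ
  | 0, m => m
  | k + 1, m => 2 ^ tw k m

/-! The recurrence gives `d_{i+1} ≤ 2^T * T + T ≤ 2^(2T)` with `T = tw i (i + 1)` bounding both
`d_i` and `d_{i-1}`, and doubling the top of a tower of positive height costs at most raising it by
one, so `d_i ≤ tw i (i + 1)` for all `i`. Exponentiating gives `2^{d_i} ≤ tw (i+1) (i+1) = a_{i+1}`. -/

lemma tw_lt_tw_succ (k m : ℕ) : tw k m < tw k (m + 1) := by
  induction k with
  | zero => exact m.lt_succ_self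
  | succ k ih => exact Nat.pow_lt_pow_right (by norm_num) ih

lemma tw_strictMono (k : ℕ) : StrictMono (tw k) :=
  strictMono_nat_of_lt_succ (tw_lt_tw_succ k)

lemma tw_lt_tw_succ_left (k m : ℕ) : tw k m < tw (k + 1) m :=
  Nat.lt_two_pow_self

lemma tw_le_tw_succ_succ (k m : ℕ) : tw k m ≤ tw (k + 1) (m + 1) :=
  (tw_lt_tw_succ_left k m).le.trans ((tw_strictMono (k + 1)).monotone m.le_succ)

lemma two_mul_tw_succ_le (k m : ℕ) : 2 * tw (k + 1) m ≤ tw (k + 1) (m + 1) := by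
  calc 2 * tw (k + 1) m = 2 ^ (tw k m + 1) := by rw [tw, pow_succ, mul_comm]
    _ ≤ 2 ^ tw k (m + 1) := Nat.pow_le_pow_right two_pos (tw_lt_tw_succ k m)

lemma two_pow_mul_add_le_two_pow_two_mul (T : ℕ) : 2 ^ T * T + T ≤ 2 ^ (2 * T) := by
  calc 2 ^ T * T + T ≤ 2 ^ T * (T + 1) := by
        rw [mul_add_one]; exact Nat.add_le_add_left Nat.lt_two_pow_self.le _
    _ ≤ 2 ^ T * 2 ^ T := Nat.mul_le_mul_left _ Nat.lt_two_pow_self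
    _ = 2 ^ (2 * T) := by rw [two_mul, pow_add]

lemma denom_le_tw (a d : ℕ → ℕ) (ha : ∀ i : ℕ, 1 ≤ i → a i = tw i i)
    (hd0 : d 0 = 1) (hd1 : d 1 = a 1)
    (hdrec : ∀ n : ℕ, d (n + 2) = a (n + 2) * d (n + 1) + d n) :
    ∀ i : ℕ, d i ≤ tw i (i + 1) := by
  intro i
  induction i using Nat.twoStepInduction with
  | zero => simp [hd0, tw]
  | one => rw [hd1, ha 1 le_rfl]; exact (tw_strictMono 1).monotone (by norm_num)
  | more n ih₀ ih₁ =>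
    set T := tw (n + 1) (n + 2)
    have ih₀' : d n ≤ T := ih₀.trans (tw_le_tw_succ_succ n (n + 1))
    calc d (n + 2) = 2 ^ T * d (n + 1) + d n := by rw [hdrec, ha (n + 2) (by omega), tw]
      _ ≤ 2 ^ T * T + T := by gcongr
      _ ≤ 2 ^ (2 * T) := two_pow_mul_add_le_two_pow_two_mul T
      _ ≤ 2 ^ tw (n + 1) (n + 3) := Nat.pow_le_pow_right two_pos (two_mul_tw_succ_le n (n + 2))
      _ = tw (n + 2) (n + 3) := rfl

/-- For the continued fraction whose partial quotients `a_i` are towers of `i`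
twos topped with `i`, the denominators satisfy `a_{i+1} ≥ 2^{d_i}`. -/
theorem stmt10 (a d : ℕ → ℕ) (ha : ∀ i : ℕ, 1 ≤ i → a i = tw i i)
    (hd0 : d 0 = 1) (hd1 : d 1 = a 1)
    (hdrec : ∀ n : ℕ, d (n + 2) = a (n + 2) * d (n + 1) + d n) :
    ∀ i : ℕ, 1 ≤ i → 2 ^ d i ≤ a (i + 1) := by
  intro i _
  rw [ha (i + 1) (by omega), tw]
  exact Nat.pow_le_pow_right two_pos (denom_le_tw a d ha hd0 hd1 hdrec i)
end

section
/- Let C = b_0 + K_{n=1}^∞ (a_n/b_n) be a continued fraction whose odd-indexed convergents tend to f_1 and even-indexed convergents tend to f_2 with f_1 ≠ f_2. Suppose there exist positive constants c_1, c_2, c_3 such that c_1 ≤ |b_i| ≤ c_2 for all i ≥ 1 and |a_{2i+1}/a_{2i}| ≤ c_3 for all i ≥ 1. Then C does not converge generally. -/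
/-!
Work in homogeneous coordinates: `C n = (A n, B n)` represents the convergent `A n / B n`,
`S_n(w)` is the image of `(w, 1)` under the matrix with columns `C n` and `C (n + 1)`, and the
chordal distance is `d(x, y) = |x ∧ y| / (|x| |y|)`.

Since the two parity limits differ, consecutive columns eventually stay `δ` apart, i.e.
`|C m ∧ C (m + 1)| ≥ δ |C m| |C (m + 1)|`. With `C m ∧ C (m + 2) = b_{m+1} (C m ∧ C (m + 1))`
and `|b| ≥ c₁` this gives `c₁ δ |C (m + 1)| ≤ d(C m, C (m + 2)) |C (m + 2)|`, so
`|C (m + 1)| / |C (m + 2)| → 0` along every parity class on which `C m` and `C (m + 2)` have the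
same limit. Of two chordally separated arguments `v_n`, `w_n`, one stays away from `∞`, and its
image `S_n` lies within `O(|C n| / |C (n + 1)|)` of `C (n + 1)`; hence the common limit `f` of
`S_n(v_n)` and `S_n(w_n)` equals the limit `φ` of a parity class, chosen with `φ ≠ 0` because the
convention `x / 0 = 0` disguises convergents at `∞` as `0`. Both images then converge to `φ`, and
as `d(S_n(v_n), S_n(w_n)) ≳ |C n| / |C (n + 1)|`, that ratio tends to `0` along all `n`: `f` is
also the limit of the other parity class, a contradiction.
-/

open Filter

/-- Chordal metric on the Riemann sphere `ℂ ∪ {∞}`, with `none = ∞`. -/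
noncomputable def sph : Option ℂ → Option ℂ → ℝ
  | none, none => 0
  | none, some z => 1 / Real.sqrt (1 + ‖z‖ ^ 2)
  | some w, none => 1 / Real.sqrt (1 + ‖w‖ ^ 2)
  | some w, some z =>
      ‖z - w‖ /
        (Real.sqrt (1 + ‖w‖ ^ 2) * Real.sqrt (1 + ‖z‖ ^ 2))

/-- `S_n(w) = (A_n + w A_{n-1})/(B_n + w B_{n-1})`, with `S_n(∞) = A_{n-1}/B_{n-1}`. -/
noncomputable def Sval (An Bn An' Bn' : ℂ) : Option ℂ → ℂ
  | none => An' / Bn'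
  | some w => (An + w * An') / (Bn + w * Bn')

/-- Convergence of a sequence of complex numbers to a point of `ℂ ∪ {∞}`. -/
def TendstoSphere (s : ℕ → ℂ) : Option ℂ → Prop
  | none => Tendsto (fun n => ‖s n‖) atTop atTop
  | some L => Tendsto s atTop (nhds L)

/-- The continued fraction with numerator convergents `A` and denominator
convergents `B` (indexed so that `A n` is the classical `A_{n-1}`) converges
generally to `f ∈ ℂ ∪ {∞}`. -/
def GenConvTo (A B : ℕ → ℂ) (f : Option ℂ) : Prop :=
  ∃ v w : ℕ → Option ℂ,
    0 < Filter.liminf (fun n => sph (v n) (w n)) atTop ∧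
    TendstoSphere (fun n => Sval (A (n + 1)) (B (n + 1)) (A n) (B n) (v n)) f ∧
    TendstoSphere (fun n => Sval (A (n + 1)) (B (n + 1)) (A n) (B n) (w n)) f

open Topology

local notation "ℂ²" => WithLp 2 (ℂ × ℂ)

namespace GenConv

open Complex ComplexConjugate WithLp

def wedge (x y : ℂ²) : ℂ := x.fst * y.snd - x.snd * y.fst

/-- The chordal distance on `ℂP¹` in homogeneous coordinates (see `sph_eq_cdist`). -/
noncomputable def cdist (x y : ℂ²) : ℝ := ‖wedge x y‖ / (‖x‖ * ‖y‖)

noncomputable def lift : Option ℂ → ℂ²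
  | none => toLp 2 (1, 0)
  | some z => toLp 2 (z, 1)

noncomputable def ratio (x : ℂ²) : ℂ := x.fst / x.snd

lemma wedge_comm (x y : ℂ²) : wedge x y = -wedge y x := by
  simp only [wedge]; ring

@[simp] lemma wedge_zero_left (y : ℂ²) : wedge 0 y = 0 := by simp [wedge]

@[simp] lemma wedge_zero_right (x : ℂ²) : wedge x 0 = 0 := by simp [wedge]

lemma wedge_lift_none (x : ℂ²) : wedge x (lift none) = -x.snd := by simp [wedge, lift]

lemma norm_sq_eq_normSq_add (x : ℂ²) : ‖x‖ ^ 2 = normSq x.fst + normSq x.snd := by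
  rw [prod_norm_sq_eq_of_L2, Complex.sq_norm, Complex.sq_norm]

lemma inner_eq_conj_mul_add (x y : ℂ²) :
    inner ℂ x y = conj x.fst * y.fst + conj x.snd * y.snd := by
  simp [mul_comm]

lemma normSq_wedge_add_normSq_inner (x y : ℂ²) :
    normSq (wedge x y) + normSq (inner ℂ x y) = ‖x‖ ^ 2 * ‖y‖ ^ 2 := by
  rw [norm_sq_eq_normSq_add, norm_sq_eq_normSq_add, inner_eq_conj_mul_add]
  simp only [wedge, normSq_apply, mul_re, mul_im, sub_re, sub_im, add_re, add_im, conj_re,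
    conj_im]
  ring

lemma norm_wedge_le (x y : ℂ²) : ‖wedge x y‖ ≤ ‖x‖ * ‖y‖ := by
  have h := normSq_wedge_add_normSq_inner x y
  rw [← Complex.sq_norm, ← Complex.sq_norm] at h
  refine (pow_le_pow_iff_left₀ (norm_nonneg _) (by positivity) two_ne_zero).1 ?_
  nlinarith [sq_nonneg ‖inner ℂ x y‖]

lemma wedge_mul_inner_self (x y z : ℂ²) :
    wedge x z * inner ℂ y y = wedge x y * inner ℂ y z + wedge y z * inner ℂ y x := by
  simp only [inner_eq_conj_mul_add, wedge]; ring

lemma norm_wedge_mul_norm_le (x y z : ℂ²) :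
    ‖wedge x z‖ * ‖y‖ ≤ ‖wedge x y‖ * ‖z‖ + ‖wedge y z‖ * ‖x‖ := by
  rcases (norm_nonneg y).eq_or_lt with hy | hy
  · rw [← hy, mul_zero]; positivity
  refine le_of_mul_le_mul_right ?_ hy
  have h := congrArg norm (wedge_mul_inner_self x y z)
  simp only [inner_self_eq_norm_sq_to_K, norm_mul, norm_pow, RCLike.norm_ofReal, abs_norm] at h
  calc ‖wedge x z‖ * ‖y‖ * ‖y‖ = ‖wedge x y * inner ℂ y z + wedge y z * inner ℂ y x‖ := by
        rw [← h]; ring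
    _ ≤ ‖wedge x y‖ * (‖y‖ * ‖z‖) + ‖wedge y z‖ * (‖y‖ * ‖x‖) := by
        refine (norm_add_le _ _).trans ?_
        rw [norm_mul, norm_mul]
        gcongr <;> exact norm_inner_le_norm _ _
    _ = (‖wedge x y‖ * ‖z‖ + ‖wedge y z‖ * ‖x‖) * ‖y‖ := by ring

lemma cdist_comm (x y : ℂ²) : cdist x y = cdist y x := by
  rw [cdist, cdist, wedge_comm, norm_neg, mul_comm ‖x‖]

lemma cdist_nonneg (x y : ℂ²) : 0 ≤ cdist x y := by unfold cdist; positivity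

lemma cdist_le_one (x y : ℂ²) : cdist x y ≤ 1 :=
  div_le_one_of_le₀ (norm_wedge_le x y) (by positivity)

@[simp] lemma cdist_zero_left (y : ℂ²) : cdist 0 y = 0 := by simp [cdist]

@[simp] lemma cdist_zero_right (x : ℂ²) : cdist x 0 = 0 := by simp [cdist]

lemma norm_wedge_eq (x y : ℂ²) : ‖wedge x y‖ = cdist x y * (‖x‖ * ‖y‖) := by
  rcases eq_or_ne x 0 with rfl | hx
  · simp
  rcases eq_or_ne y 0 with rfl | hy
  · simp
  rw [cdist, div_mul_cancel₀ _ (by positivity)]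

lemma cdist_triangle (x : ℂ²) {y : ℂ²} (z : ℂ²) (hy : y ≠ 0) :
    cdist x z ≤ cdist x y + cdist y z := by
  rcases eq_or_ne x 0 with rfl | hx
  · simpa using add_nonneg (cdist_nonneg 0 y) (cdist_nonneg y z)
  rcases eq_or_ne z 0 with rfl | hz
  · simpa using add_nonneg (cdist_nonneg x y) (cdist_nonneg y 0)
  have hx' : 0 < ‖x‖ := norm_pos_iff.2 hx
  have hy' : 0 < ‖y‖ := norm_pos_iff.2 hy
  have hz' : 0 < ‖z‖ := norm_pos_iff.2 hz
  calc cdist x z = ‖wedge x z‖ * ‖y‖ / (‖x‖ * ‖y‖ * ‖z‖) := by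
        rw [cdist]; field_simp
    _ ≤ (‖wedge x y‖ * ‖z‖ + ‖wedge y z‖ * ‖x‖) / (‖x‖ * ‖y‖ * ‖z‖) := by
        gcongr; exact norm_wedge_mul_norm_le x y z
    _ = cdist x y + cdist y z := by rw [cdist, cdist]; field_simp

lemma ne_zero_of_pos_le_cdist {x y : ℂ²} {δ : ℝ} (hδ : 0 < δ) (h : δ ≤ cdist x y) :
    x ≠ 0 ∧ y ≠ 0 := by
  constructor <;> rintro rfl <;> simp at h <;> linarith

lemma lift_ne_zero (p : Option ℂ) : lift p ≠ 0 := by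
  cases p <;> simp [lift]

lemma norm_lift_some (z : ℂ) : ‖lift (some z)‖ = √(1 + ‖z‖ ^ 2) := by
  rw [lift, prod_norm_eq_of_L2]; simp [add_comm]

lemma one_le_norm_lift_some (z : ℂ) : 1 ≤ ‖lift (some z)‖ := by
  rw [norm_lift_some]; exact Real.one_le_sqrt.2 (by nlinarith [sq_nonneg ‖z‖])

lemma norm_lift_none : ‖lift none‖ = 1 := by
  rw [lift, prod_norm_eq_of_L2]; simp

lemma sph_eq_cdist (p q : Option ℂ) : sph p q = cdist (lift p) (lift q) := by
  cases p <;> cases q <;> simp only [sph, cdist, norm_lift_some, norm_lift_none] <;>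
    simp [wedge, lift, norm_sub_rev]

lemma sph_pos {p q : Option ℂ} (h : p ≠ q) : 0 < sph p q := by
  rcases p with _ | w <;> rcases q with _ | z
  · exact absurd rfl h
  · simp only [sph]; positivity
  · simp only [sph]; positivity
  · have : z - w ≠ 0 := sub_ne_zero.2 fun hzw => h (by rw [hzw])
    simp only [sph]; positivity

lemma exists_pos_le_sph (S : Finset (Option ℂ)) :
    ∃ ρ > 0, ∀ p ∈ S, ∀ q ∈ S, p ≠ q → ρ ≤ sph p q := by
  by_cases hS : S.offDiag.Nonempty
  · obtain ⟨pq, hpq, hmin⟩ := S.offDiag.exists_min_image (fun pq => sph pq.1 pq.2) hS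
    exact ⟨_, sph_pos (Finset.mem_offDiag.1 hpq).2.2,
      fun p hp q hq hne => hmin (p, q) (Finset.mem_offDiag.2 ⟨hp, hq, hne⟩)⟩
  · exact ⟨1, one_pos, fun p hp q hq hne =>
      absurd ⟨(p, q), Finset.mem_offDiag.2 ⟨hp, hq, hne⟩⟩ hS⟩

lemma cdist_lift_none (x : ℂ²) : cdist x (lift none) = ‖x.snd‖ / ‖x‖ := by
  rw [cdist, wedge_lift_none, norm_neg, norm_lift_none, mul_one]

lemma cdist_lift_some_le {x : ℂ²} (hx : x.snd ≠ 0) (z : ℂ) :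
    cdist x (lift (some z)) ≤ ‖ratio x - z‖ := by
  have hw : wedge x (lift (some z)) = x.snd * (ratio x - z) := by
    simp only [wedge, lift, ratio, toLp_fst, toLp_snd]; field_simp
  rw [cdist, hw, norm_mul, mul_comm]
  refine div_le_of_le_mul₀ (by positivity) (norm_nonneg _)
    (mul_le_mul_of_nonneg_left ?_ (norm_nonneg _))
  exact (WithLp.norm_snd_le (x := x)).trans
    (le_mul_of_one_le_right (norm_nonneg x) (one_le_norm_lift_some z))

lemma cdist_lift_none_le {x : ℂ²} (hx : x.fst ≠ 0) : cdist x (lift none) ≤ ‖ratio x‖⁻¹ := by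
  rw [cdist_lift_none, ratio, norm_div, inv_div]
  exact div_le_div_of_nonneg_left (norm_nonneg _) (norm_pos_iff.2 hx) (WithLp.norm_fst_le (x := x))

lemma cdist_lift_ite_le (x : ℂ²) (z : ℂ) :
    cdist x (lift (if x.snd = 0 then none else some z)) ≤ ‖ratio x - z‖ := by
  split_ifs with h
  · rw [cdist_lift_none, h, norm_zero, zero_div]; positivity
  · exact cdist_lift_some_le h z

/-- `Sval` divides with `x / 0 = 0`, so `S_n(w) → f` only forces the point `S_n(w)` of the
sphere towards `f` or towards `∞`; this is the distance to that pair of points. -/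
noncomputable def cdistPair (f : Option ℂ) (x : ℂ²) : ℝ :=
  min (cdist x (lift f)) (cdist x (lift none))

lemma cdistPair_nonneg (f : Option ℂ) (x : ℂ²) : 0 ≤ cdistPair f x :=
  le_min (cdist_nonneg _ _) (cdist_nonneg _ _)

lemma cdistPair_le_add (f : Option ℂ) (x : ℂ²) {c : ℂ²} (hc : c ≠ 0) :
    cdistPair f x ≤ cdist x c + cdistPair f c := by
  rw [cdistPair, cdistPair, ← min_add_add_left]
  exact min_le_min (cdist_triangle _ _ hc) (cdist_triangle _ _ hc)

lemma eq_some_of_cdistPair_eq_zero {f : Option ℂ} {z : ℂ}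
    (h : cdistPair f (lift (some z)) = 0) : f = some z := by
  by_contra hf
  rw [cdistPair, ← sph_eq_cdist, ← sph_eq_cdist] at h
  exact (lt_min (sph_pos (Ne.symm hf)) (sph_pos (Option.some_ne_none z))).ne' h

lemma tendsto_cdistPair {X : ℕ → ℂ²} {f : Option ℂ}
    (h : TendstoSphere (fun n => ratio (X n)) f) :
    Tendsto (fun n => cdistPair f (X n)) atTop (𝓝 0) := by
  cases f with
  | some L =>
    have hL : Tendsto (fun n => ‖ratio (X n) - L‖) atTop (𝓝 0) :=
      tendsto_iff_norm_sub_tendsto_zero.1 h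
    refine squeeze_zero (fun n => cdistPair_nonneg _ _) (fun n => ?_) hL
    by_cases hX : (X n).snd = 0
    · refine (min_le_right _ _).trans ?_
      rw [cdist_lift_none, hX, norm_zero, zero_div]; positivity
    · exact (min_le_left _ _).trans (cdist_lift_some_le hX L)
  | none =>
    have hinv : Tendsto (fun n => ‖ratio (X n)‖⁻¹) atTop (𝓝 0) :=
      tendsto_inv_atTop_zero.comp h
    refine squeeze_zero' (Eventually.of_forall fun n => cdistPair_nonneg _ _) ?_ hinv
    filter_upwards [(tendsto_atTop.1 h) 1] with n hn
    have hX : (X n).fst ≠ 0 := by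
      intro h0; rw [ratio, h0, zero_div, norm_zero] at hn; linarith
    exact (min_le_right _ _).trans (cdist_lift_none_le hX)

lemma tendsto_cdist_of_tendsto {X : ℕ → ℂ²} {L : ℂ} (hL : L ≠ 0)
    (h : Tendsto (fun n => ratio (X n)) atTop (𝓝 L)) :
    Tendsto (fun n => cdist (X n) (lift (some L))) atTop (𝓝 0) := by
  refine squeeze_zero' (Eventually.of_forall fun n => cdist_nonneg _ _) ?_
    (tendsto_iff_norm_sub_tendsto_zero.1 h)
  filter_upwards [h.eventually_ne hL] with n hn
  refine cdist_lift_some_le (fun h0 => hn ?_) L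
  rw [ratio, h0, div_zero]

lemma cdistPair_eq_zero_of_tendsto {ι : Type*} {l : Filter ι} [l.NeBot] {f : Option ℂ}
    {c : ι → ℂ²} {x : ℂ²} (hc : ∀ᶠ i in l, c i ≠ 0)
    (hx : Tendsto (fun i => cdist x (c i)) l (𝓝 0))
    (hf : Tendsto (fun i => cdistPair f (c i)) l (𝓝 0)) : cdistPair f x = 0 := by
  refine le_antisymm ?_ (cdistPair_nonneg f x)
  refine ge_of_tendsto (by simpa using hx.add hf) ?_
  filter_upwards [hc] with i hi using cdistPair_le_add f x hi

def moebius (p q x : ℂ²) : ℂ² := x.fst • p + x.snd • q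

lemma wedge_moebius (p q x y : ℂ²) :
    wedge (moebius p q x) (moebius p q y) = wedge p q * wedge x y := by
  simp only [wedge, moebius, add_fst, add_snd, smul_fst, smul_snd, smul_eq_mul]; ring

lemma moebius_lift_none (p q : ℂ²) : moebius p q (lift none) = p := by simp [moebius, lift]

lemma moebius_lift_zero (p q : ℂ²) : moebius p q (lift (some 0)) = q := by
  simp [moebius, lift]

lemma norm_moebius_le (p q x : ℂ²) : ‖moebius p q x‖ ≤ (‖p‖ + ‖q‖) * ‖x‖ := by
  calc ‖moebius p q x‖ ≤ ‖x.fst‖ * ‖p‖ + ‖x.snd‖ * ‖q‖ := by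
        simpa only [moebius, norm_smul] using norm_add_le (x.fst • p) (x.snd • q)
    _ ≤ ‖x‖ * ‖p‖ + ‖x‖ * ‖q‖ := by
        gcongr
        exacts [WithLp.norm_fst_le (x := x), WithLp.norm_snd_le (x := x)]
    _ = (‖p‖ + ‖q‖) * ‖x‖ := by ring

lemma mul_norm_le_norm_moebius {p q x : ℂ²} {δ η : ℝ} (hδ : 0 < δ) (hη : 0 ≤ η)
    (hpq : δ ≤ cdist p q) (hx : η ≤ cdist x (lift none)) :
    δ * η * ‖q‖ * ‖x‖ ≤ ‖moebius p q x‖ := by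
  have hp : 0 < ‖p‖ := norm_pos_iff.2 (ne_zero_of_pos_le_cdist hδ hpq).1
  have hw := wedge_moebius p q x (lift none)
  rw [moebius_lift_none] at hw
  refine le_of_mul_le_mul_right ?_ hp
  calc δ * η * ‖q‖ * ‖x‖ * ‖p‖ = (δ * (‖p‖ * ‖q‖)) * (η * (‖x‖ * ‖lift none‖)) := by
        rw [norm_lift_none]; ring
    _ ≤ ‖wedge p q‖ * ‖wedge x (lift none)‖ := by
        rw [norm_wedge_eq p q, norm_wedge_eq x (lift none)]
        exact mul_le_mul (by gcongr) (by gcongr) (by positivity)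
          (mul_nonneg (cdist_nonneg _ _) (by positivity))
    _ ≤ ‖moebius p q x‖ * ‖p‖ := by rw [← norm_mul, ← hw]; exact norm_wedge_le _ _

lemma cdist_moebius_le {p q x : ℂ²} {δ η : ℝ} (hδ : 0 < δ) (hη : 0 < η)
    (hpq : δ ≤ cdist p q) (hx : η ≤ cdist x (lift none)) :
    cdist q (moebius p q x) ≤ ‖p‖ / ‖q‖ / (δ * η) := by
  have hq : 0 < ‖q‖ := norm_pos_iff.2 (ne_zero_of_pos_le_cdist hδ hpq).2
  have hx' : 0 < ‖x‖ := norm_pos_iff.2 (ne_zero_of_pos_le_cdist hη hx).1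
  have hm := mul_norm_le_norm_moebius hδ hη.le hpq hx
  have hw := wedge_moebius p q (lift (some 0)) x
  rw [moebius_lift_zero] at hw
  calc cdist q (moebius p q x)
      = ‖wedge p q‖ * ‖wedge (lift (some 0)) x‖ / (‖q‖ * ‖moebius p q x‖) := by
        rw [cdist, hw, norm_mul]
    _ ≤ ‖p‖ * ‖q‖ * ‖x‖ / (‖q‖ * (δ * η * ‖q‖ * ‖x‖)) := by
        gcongr
        · exact norm_wedge_le p q
        · simpa [wedge, lift] using WithLp.norm_fst_le (x := x)
    _ = ‖p‖ / ‖q‖ / (δ * η) := by field_simp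

lemma cdistPair_le_of_moebius {p q x : ℂ²} {δ η : ℝ} (f : Option ℂ) (hδ : 0 < δ)
    (hη : 0 < η) (hpq : δ ≤ cdist p q) (hx : η ≤ cdist x (lift none)) :
    cdistPair f q ≤ ‖p‖ / ‖q‖ / (δ * η) + cdistPair f (moebius p q x) := by
  have hm : moebius p q x ≠ 0 := by
    have hq : 0 < ‖q‖ := norm_pos_iff.2 (ne_zero_of_pos_le_cdist hδ hpq).2
    have hx' : 0 < ‖x‖ := norm_pos_iff.2 (ne_zero_of_pos_le_cdist hη hx).1
    exact norm_pos_iff.1 (lt_of_lt_of_le (by positivity) (mul_norm_le_norm_moebius hδ hη.le hpq hx))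
  exact (cdistPair_le_add f q hm).trans (by gcongr; exact cdist_moebius_le hδ hη hpq hx)

lemma cdistPair_le_of_moebius_pair {p q x y : ℂ²} {δ ε : ℝ} (f : Option ℂ) (hδ : 0 < δ)
    (hε : 0 < ε) (hpq : δ ≤ cdist p q) (hxy : ε ≤ cdist x y) :
    cdistPair f q ≤ ‖p‖ / ‖q‖ / (δ * (ε / 2)) +
      (cdistPair f (moebius p q x) + cdistPair f (moebius p q y)) := by
  -- one of `x`, `y` is at distance at least `ε / 2` from `∞`
  have h := (hxy.trans (cdist_triangle x y (lift_ne_zero none))).trans_eq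
    (congrArg _ (cdist_comm _ y))
  rcases le_or_gt (ε / 2) (cdist x (lift none)) with hx | hx
  · refine (cdistPair_le_of_moebius f hδ (by positivity) hpq hx).trans ?_
    linarith [cdistPair_nonneg f (moebius p q y)]
  · refine (cdistPair_le_of_moebius (x := y) (η := ε / 2) f hδ (by positivity) hpq
      (by linarith)).trans ?_
    linarith [cdistPair_nonneg f (moebius p q x)]

lemma cdist_mul_cdist_mul_le (p q x y : ℂ²) :
    cdist p q * cdist x y * (‖p‖ * ‖q‖) ≤
      cdist (moebius p q x) (moebius p q y) * (‖p‖ + ‖q‖) ^ 2 := by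
  rcases eq_or_ne x 0 with rfl | hx
  · simp only [cdist_zero_left, mul_zero, zero_mul]
    exact mul_nonneg (cdist_nonneg _ _) (sq_nonneg _)
  rcases eq_or_ne y 0 with rfl | hy
  · simp only [cdist_zero_right, mul_zero, zero_mul]
    exact mul_nonneg (cdist_nonneg _ _) (sq_nonneg _)
  have hxy : 0 < ‖x‖ * ‖y‖ := mul_pos (norm_pos_iff.2 hx) (norm_pos_iff.2 hy)
  refine le_of_mul_le_mul_right ?_ hxy
  calc cdist p q * cdist x y * (‖p‖ * ‖q‖) * (‖x‖ * ‖y‖)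
      = cdist (moebius p q x) (moebius p q y) * (‖moebius p q x‖ * ‖moebius p q y‖) := by
        rw [← norm_wedge_eq, wedge_moebius, norm_mul, norm_wedge_eq p q, norm_wedge_eq x y]
        ring
    _ ≤ cdist (moebius p q x) (moebius p q y) * ((‖p‖ + ‖q‖) * ‖x‖ * ((‖p‖ + ‖q‖) * ‖y‖)) := by
        gcongr
        · exact cdist_nonneg _ _
        exacts [norm_moebius_le p q x, norm_moebius_le p q y]
    _ = cdist (moebius p q x) (moebius p q y) * (‖p‖ + ‖q‖) ^ 2 * (‖x‖ * ‖y‖) := by ring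

lemma norm_div_norm_le_cdist_moebius {p q x y : ℂ²} {δ ε K : ℝ} (hδ : 0 < δ) (hε : 0 < ε)
    (hpq : δ ≤ cdist p q) (hxy : ε ≤ cdist x y) (hK : ‖p‖ ≤ K * ‖q‖) :
    ‖p‖ / ‖q‖ ≤ (1 + K) ^ 2 / (δ * ε) * cdist (moebius p q x) (moebius p q y) := by
  have hq : 0 < ‖q‖ := norm_pos_iff.2 (ne_zero_of_pos_le_cdist hδ hpq).2
  set D := cdist (moebius p q x) (moebius p q y)
  have h1 : δ * ε * (‖p‖ * ‖q‖) ≤ D * (‖p‖ + ‖q‖) ^ 2 :=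
    (mul_le_mul_of_nonneg_right (mul_le_mul hpq hxy hε.le (cdist_nonneg _ _))
      (by positivity)).trans (cdist_mul_cdist_mul_le p q x y)
  have h2 : D * (‖p‖ + ‖q‖) ^ 2 ≤ D * ((1 + K) * ‖q‖) ^ 2 :=
    mul_le_mul_of_nonneg_left (pow_le_pow_left₀ (by positivity) (by linarith) 2)
      (cdist_nonneg _ _)
  rw [div_le_iff₀ hq, div_mul_eq_mul_div, div_mul_eq_mul_div, le_div_iff₀ (mul_pos hδ hε)]
  refine le_of_mul_le_mul_right ?_ hq
  nlinarith

section Sequences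

variable {C : ℕ → ℂ²}

lemma eventually_half_le_cdist {τ : ℕ → Option ℂ} {ρ : ℝ} (hρ0 : 0 < ρ)
    (hC : ∀ᶠ m in atTop, C m ≠ 0)
    (hτ : Tendsto (fun m => cdist (C m) (lift (τ m))) atTop (𝓝 0))
    (hρ : ∀ᶠ m in atTop, ρ ≤ sph (τ m) (τ (m + 1))) :
    ∀ᶠ m in atTop, ρ / 2 ≤ cdist (C m) (C (m + 1)) := by
  have hsmall := hτ.eventually (gt_mem_nhds (show (0 : ℝ) < ρ / 4 by positivity))
  filter_upwards [hC, (tendsto_add_atTop_nat 1).eventually hC, hρ, hsmall,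
    (tendsto_add_atTop_nat 1).eventually hsmall] with m h0 h1 hm e0 e1
  rw [sph_eq_cdist] at hm
  have t1 := cdist_triangle (lift (τ m)) (lift (τ (m + 1))) h0
  have t2 := cdist_triangle (C m) (lift (τ (m + 1))) h1
  rw [cdist_comm (lift (τ m)) (C m)] at t1
  linarith

lemma wedge_add_two {α β : ℕ → ℂ} (hrec : ∀ n, C (n + 2) = β n • C (n + 1) + α n • C n)
    (m : ℕ) : wedge (C m) (C (m + 2)) = β m * wedge (C m) (C (m + 1)) := by
  rw [hrec]; simp only [wedge, add_fst, add_snd, smul_fst, smul_snd, smul_eq_mul]; ring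

lemma eventually_mul_norm_le {α β : ℕ → ℂ} {c δ : ℝ}
    (hrec : ∀ n, C (n + 2) = β n • C (n + 1) + α n • C n) (hβ : ∀ n, c ≤ ‖β n‖) (hδ : 0 ≤ δ)
    (hC : ∀ᶠ m in atTop, C m ≠ 0) (hsep : ∀ᶠ m in atTop, δ ≤ cdist (C m) (C (m + 1))) :
    ∀ᶠ m in atTop, c * δ * ‖C (m + 1)‖ ≤ cdist (C m) (C (m + 2)) * ‖C (m + 2)‖ := by
  filter_upwards [hC, hsep] with m hm hδm
  refine le_of_mul_le_mul_left ?_ (norm_pos_iff.2 hm)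
  calc ‖C m‖ * (c * δ * ‖C (m + 1)‖) = c * (δ * (‖C m‖ * ‖C (m + 1)‖)) := by ring
    _ ≤ ‖β m‖ * (cdist (C m) (C (m + 1)) * (‖C m‖ * ‖C (m + 1)‖)) :=
        mul_le_mul (hβ m) (by gcongr) (by positivity) (norm_nonneg _)
    _ = ‖C m‖ * (cdist (C m) (C (m + 2)) * ‖C (m + 2)‖) := by
        rw [← norm_wedge_eq, ← norm_mul, ← wedge_add_two hrec, norm_wedge_eq]; ring

lemma eventually_norm_le_mul_norm {c δ : ℝ}
    (hkey : ∀ᶠ m in atTop, c * δ * ‖C (m + 1)‖ ≤ cdist (C m) (C (m + 2)) * ‖C (m + 2)‖)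
    (hcδ : 0 < c * δ) : ∀ᶠ n in atTop, ‖C n‖ ≤ (c * δ)⁻¹ * ‖C (n + 1)‖ := by
  rw [← map_add_atTop_eq_nat 1, eventually_map]
  filter_upwards [hkey] with m hm
  rw [inv_mul_eq_div, le_div_iff₀ hcδ]
  nlinarith [cdist_le_one (C m) (C (m + 2)), norm_nonneg (C (m + 2))]

lemma tendsto_norm_div_norm_of_tendsto_cdist {l : Filter ℕ} {c δ : ℝ} (hl : l ≤ atTop)
    (hkey : ∀ᶠ m in atTop, c * δ * ‖C (m + 1)‖ ≤ cdist (C m) (C (m + 2)) * ‖C (m + 2)‖)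
    (hcδ : 0 < c * δ) (h : Tendsto (fun m => cdist (C m) (C (m + 2))) l (𝓝 0)) :
    Tendsto (fun m => ‖C (m + 1)‖ / ‖C (m + 2)‖) l (𝓝 0) := by
  refine squeeze_zero' (Eventually.of_forall fun m => by positivity) ?_
    (by simpa using h.div_const (c * δ))
  filter_upwards [hl hkey] with m hm
  rcases (norm_nonneg (C (m + 2))).eq_or_lt with h0 | hpos
  · rw [← h0, div_zero]; exact div_nonneg (cdist_nonneg _ _) hcδ.le
  · rw [div_le_div_iff₀ hpos hcδ]; linarith

end Sequences

structure GenConvWitness (C : ℕ → ℂ²) (f : Option ℂ) where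
  v : ℕ → Option ℂ
  w : ℕ → Option ℂ
  ε : ℝ
  ε_pos : 0 < ε
  le_cdist : ∀ᶠ n in atTop, ε ≤ cdist (lift (v n)) (lift (w n))
  tendsto_v : TendstoSphere (fun n => ratio (moebius (C n) (C (n + 1)) (lift (v n)))) f
  tendsto_w : TendstoSphere (fun n => ratio (moebius (C n) (C (n + 1)) (lift (w n)))) f

namespace GenConvWitness

variable {C : ℕ → ℂ²} {f : Option ℂ} {δ : ℝ}

lemma tendsto_cdistPair (W : GenConvWitness C f) (hδ : 0 < δ)
    (hsep : ∀ᶠ n in atTop, δ ≤ cdist (C n) (C (n + 1))) {ι : Type*} {l : Filter ι}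
    {j : ι → ℕ} (hj : Tendsto j l atTop)
    (hr : Tendsto (fun i => ‖C (j i)‖ / ‖C (j i + 1)‖) l (𝓝 0)) :
    Tendsto (fun i => cdistPair f (C (j i + 1))) l (𝓝 0) := by
  have hv := (GenConv.tendsto_cdistPair W.tendsto_v).comp hj
  have hw := (GenConv.tendsto_cdistPair W.tendsto_w).comp hj
  refine squeeze_zero' (Eventually.of_forall fun i => cdistPair_nonneg _ _) ?_
    (by simpa using (hr.div_const (δ * (W.ε / 2))).add (hv.add hw))
  filter_upwards [hj.eventually (hsep.and W.le_cdist)] with i hi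
  exact cdistPair_le_of_moebius_pair f hδ W.ε_pos hi.1 hi.2

lemma eq_some (W : GenConvWitness C f) (hδ : 0 < δ)
    (hsep : ∀ᶠ n in atTop, δ ≤ cdist (C n) (C (n + 1))) (hC : ∀ᶠ n in atTop, C n ≠ 0)
    {ι : Type*} {l : Filter ι} [l.NeBot] {j : ι → ℕ} (hj : Tendsto j l atTop)
    (hr : Tendsto (fun i => ‖C (j i)‖ / ‖C (j i + 1)‖) l (𝓝 0)) {z : ℂ}
    (hz : Tendsto (fun i => cdist (C (j i + 1)) (lift (some z))) l (𝓝 0)) : f = some z :=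
  eq_some_of_cdistPair_eq_zero <| cdistPair_eq_zero_of_tendsto
    (hj.eventually ((tendsto_add_atTop_nat 1).eventually hC))
    (by simpa only [cdist_comm] using hz) (W.tendsto_cdistPair hδ hsep hj hr)

lemma tendsto_norm_div_norm {φ : ℂ} (W : GenConvWitness C (some φ)) (hφ : φ ≠ 0) {K : ℝ}
    (hδ : 0 < δ) (hsep : ∀ᶠ n in atTop, δ ≤ cdist (C n) (C (n + 1)))
    (hK : ∀ᶠ n in atTop, ‖C n‖ ≤ K * ‖C (n + 1)‖) :
    Tendsto (fun n => ‖C n‖ / ‖C (n + 1)‖) atTop (𝓝 0) := by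
  have hv := tendsto_cdist_of_tendsto hφ W.tendsto_v
  have hw := tendsto_cdist_of_tendsto hφ W.tendsto_w
  refine squeeze_zero' (Eventually.of_forall fun n => by positivity) ?_
    (by simpa using ((hv.add hw).const_mul ((1 + K) ^ 2 / (δ * W.ε))))
  filter_upwards [hsep, W.le_cdist, hK] with n h1 h2 h3
  refine (norm_div_norm_le_cdist_moebius hδ W.ε_pos h1 h2 h3).trans
    (mul_le_mul_of_nonneg_left ?_ (div_nonneg (sq_nonneg _) (mul_pos hδ W.ε_pos).le))
  exact (cdist_triangle _ _ (lift_ne_zero (some φ))).trans_eq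
    (by rw [cdist_comm (lift (some φ))])

end GenConvWitness

section TwoLimits

variable {C : ℕ → ℂ²} {F : ℕ → ℂ}

lemma eq_or_eq_of_periodic (hF : Function.Periodic F 2) (m : ℕ) : F m = F 0 ∨ F m = F 1 := by
  rw [← hF.map_mod_nat m]
  rcases Nat.mod_two_eq_zero_or_one m with h | h <;> simp [h]

lemma norm_sub_succ_of_periodic (hF : Function.Periodic F 2) (m : ℕ) :
    ‖F (m + 1) - F m‖ = ‖F 1 - F 0‖ := by
  induction m with
  | zero => rfl
  | succ m ih => rw [hF m, norm_sub_rev, ih]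

lemma apply_succ_ne_of_periodic (hF : Function.Periodic F 2) (hF01 : F 0 ≠ F 1) (m : ℕ) :
    F (m + 1) ≠ F m := fun h => by
  have := norm_sub_succ_of_periodic hF m
  rw [h, sub_self, norm_zero] at this
  exact hF01 (sub_eq_zero.1 (norm_eq_zero.1 this.symm)).symm

lemma eventually_ratio_ne (hF : Function.Periodic F 2) (hF01 : F 0 ≠ F 1)
    (hu : Tendsto (fun m => ratio (C m) - F m) atTop (𝓝 0)) :
    ∀ᶠ m in atTop, ratio (C m) ≠ ratio (C (m + 1)) := by
  have hκ : 0 < ‖F 1 - F 0‖ := norm_pos_iff.2 (sub_ne_zero.2 hF01.symm)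
  have hsmall : ∀ᶠ m in atTop, ‖ratio (C m) - F m‖ < ‖F 1 - F 0‖ / 2 := by
    simpa using Metric.tendsto_nhds.1 hu _ (half_pos hκ)
  filter_upwards [hsmall, (tendsto_add_atTop_nat 1).eventually hsmall] with m h0 h1 heq
  have h := norm_sub_le (ratio (C m) - F m) (ratio (C (m + 1)) - F (m + 1))
  rw [show ratio (C m) - F m - (ratio (C (m + 1)) - F (m + 1)) = F (m + 1) - F m by
    rw [heq]; ring, norm_sub_succ_of_periodic hF] at h
  linarith

lemma eventually_ne_zero {α β : ℕ → ℂ} (hrec : ∀ n, C (n + 2) = β n • C (n + 1) + α n • C n)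
    (hβ : ∀ n, β n ≠ 0) (hratio : ∀ᶠ m in atTop, ratio (C m) ≠ ratio (C (m + 1))) :
    ∀ᶠ m in atTop, C m ≠ 0 := by
  filter_upwards [(tendsto_add_atTop_nat 1).eventually hratio] with m hm h0
  apply hm
  rw [show m + 1 + 1 = m + 2 from rfl, hrec, h0, smul_zero, add_zero]
  simp only [ratio, smul_fst, smul_snd, smul_eq_mul, mul_div_mul_left _ _ (hβ m)]

lemma eventually_snd_succ_ne_zero (hratio : ∀ᶠ m in atTop, ratio (C m) ≠ ratio (C (m + 1))) :
    ∀ᶠ m in atTop, (C m).snd = 0 → (C (m + 1)).snd ≠ 0 := by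
  filter_upwards [hratio] with m hm h0 h1
  exact hm (by simp [ratio, h0, h1])

lemma eventually_snd_ne_zero (hu : Tendsto (fun m => ratio (C m) - F m) atTop (𝓝 0)) {k : ℕ}
    (hk : F k ≠ 0) : ∀ᶠ m in atTop, F m = F k → (C m).snd ≠ 0 := by
  filter_upwards [Metric.tendsto_nhds.1 hu _ (norm_pos_iff.2 hk)] with m hm hFm h0
  simp [ratio, h0, hFm] at hm

lemma frequently_snd_ne_zero {α β : ℕ → ℂ}
    (hrec : ∀ n, C (n + 2) = β n • C (n + 1) + α n • C n) (hβ : ∀ n, β n ≠ 0)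
    (hF : Function.Periodic F 2) (hB : ∀ᶠ m in atTop, (C m).snd = 0 → (C (m + 1)).snd ≠ 0)
    (k : ℕ) : ∃ᶠ m in atTop, F m = F k ∧ (C m).snd ≠ 0 := by
  have hfreq : ∃ᶠ m in atTop, F m = F k :=
    frequently_atTop.2 fun N => ⟨k + N * 2, by omega, hF.nat_mul N k⟩
  by_contra h
  rw [not_frequently] at h
  obtain ⟨m, hm, h0, h2, hB'⟩ :=
    (hfreq.and_eventually (h.and (((tendsto_add_atTop_nat 2).eventually h).and hB))).exists
  have s0 : (C m).snd = 0 := not_not.1 fun hs => h0 ⟨hm, hs⟩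
  have s2 : (C (m + 2)).snd = 0 := not_not.1 fun hs => h2 ⟨(hF m).trans hm, hs⟩
  refine hB' s0 ?_
  simpa [s0, s2, hβ m] using (congrArg WithLp.snd (hrec m)).symm

lemma exists_pos_eventually_le_cdist (hC : ∀ᶠ m in atTop, C m ≠ 0)
    (hF : Function.Periodic F 2) (hF01 : F 0 ≠ F 1)
    (hu : Tendsto (fun m => ratio (C m) - F m) atTop (𝓝 0))
    (hB : ∀ᶠ m in atTop, (C m).snd = 0 → (C (m + 1)).snd ≠ 0) :
    ∃ δ > 0, ∀ᶠ m in atTop, δ ≤ cdist (C m) (C (m + 1)) := by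
  -- `C m` approaches `lift (τ m)`; where `(C m).snd = 0` the junk value `ratio (C m) = 0`
  -- says nothing, but `C m` is then `∞` itself
  set τ : ℕ → Option ℂ := fun m => if (C m).snd = 0 then none else some (F m)
  have hτS : ∀ m, τ m ∈ ({none, some (F 0), some (F 1)} : Finset (Option ℂ)) := fun m => by
    rcases eq_or_eq_of_periodic hF m with h | h <;> simp [τ, h] <;> tauto
  have hτ : ∀ᶠ m in atTop, τ m ≠ τ (m + 1) := by
    filter_upwards [hB] with m hm
    have hF' := (apply_succ_ne_of_periodic hF hF01 m).symm
    simp only [τ]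
    split_ifs <;> simp_all
  obtain ⟨ρ, hρ, hρS⟩ := exists_pos_le_sph {none, some (F 0), some (F 1)}
  refine ⟨ρ / 2, half_pos hρ, eventually_half_le_cdist (τ := τ) hρ hC ?_ ?_⟩
  · exact squeeze_zero (fun m => cdist_nonneg _ _) (fun m => cdist_lift_ite_le (C m) (F m))
      (by simpa using hu.norm)
  · filter_upwards [hτ] with m hm using hρS _ (hτS m) _ (hτS (m + 1)) hm

lemma tendsto_cdist_lift_some (hu : Tendsto (fun m => ratio (C m) - F m) atTop (𝓝 0))
    {ι : Type*} {l : Filter ι} {j : ι → ℕ} (hj : Tendsto j l atTop) {z : ℂ}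
    (hz : ∀ᶠ i in l, F (j i) = z ∧ (C (j i)).snd ≠ 0) :
    Tendsto (fun i => cdist (C (j i)) (lift (some z))) l (𝓝 0) := by
  refine squeeze_zero' (Eventually.of_forall fun i => cdist_nonneg _ _) ?_
    (by simpa using (hu.comp hj).norm)
  filter_upwards [hz] with i hi
  simpa [hi.1] using cdist_lift_some_le hi.2 z

lemma GenConvWitness.eq_some_of_apply_ne_zero {f : Option ℂ} (W : GenConvWitness C f)
    {c δ : ℝ} (hδ : 0 < δ) (hcδ : 0 < c * δ)
    (hsep : ∀ᶠ n in atTop, δ ≤ cdist (C n) (C (n + 1))) (hC : ∀ᶠ n in atTop, C n ≠ 0)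
    (hkey : ∀ᶠ m in atTop, c * δ * ‖C (m + 1)‖ ≤ cdist (C m) (C (m + 2)) * ‖C (m + 2)‖)
    (hF : Function.Periodic F 2) (hu : Tendsto (fun m => ratio (C m) - F m) atTop (𝓝 0))
    {k : ℕ} (hk : F k ≠ 0) : f = some (F k) := by
  let l := atTop ⊓ 𝓟 {m | F m = F k}
  have : l.NeBot := frequently_iff_neBot.1
    (frequently_atTop.2 fun N => ⟨k + N * 2, by omega, hF.nat_mul N k⟩)
  have hl : l ≤ atTop := inf_le_left
  have hsnd := eventually_snd_ne_zero hu hk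
  have hm : ∀ᶠ m in l, F m = F k ∧ (C m).snd ≠ 0 := by
    filter_upwards [hl hsnd, mem_inf_of_right (mem_principal_self _)] with m h1 h2
    exact ⟨h2, h1 h2⟩
  have hm2 : ∀ᶠ m in l, F (m + 2) = F k ∧ (C (m + 2)).snd ≠ 0 := by
    filter_upwards [hl ((tendsto_add_atTop_nat 2).eventually hsnd), hm] with m h1 h2
    exact ⟨(hF m).trans h2.1, h1 ((hF m).trans h2.1)⟩
  have h0 := tendsto_cdist_lift_some hu (tendsto_id.mono_left hl) hm
  have h2 := tendsto_cdist_lift_some hu ((tendsto_add_atTop_nat 2).mono_left hl) hm2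
  have hpd : Tendsto (fun m => cdist (C m) (C (m + 2))) l (𝓝 0) := by
    refine squeeze_zero (fun m => cdist_nonneg _ _) (fun m => ?_) (by simpa using h0.add h2)
    exact (cdist_triangle _ _ (lift_ne_zero _)).trans_eq (by rw [cdist_comm (lift _)])
  exact W.eq_some hδ hsep hC ((tendsto_add_atTop_nat 1).mono_left hl)
    (tendsto_norm_div_norm_of_tendsto_cdist hl hkey hcδ hpd) h2

theorem isEmpty_genConvWitness {α β : ℕ → ℂ} {c : ℝ}
    (hrec : ∀ n, C (n + 2) = β n • C (n + 1) + α n • C n) (hc : 0 < c) (hβ : ∀ n, c ≤ ‖β n‖)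
    (hF : Function.Periodic F 2) (hF01 : F 0 ≠ F 1)
    (hu : Tendsto (fun m => ratio (C m) - F m) atTop (𝓝 0)) (f : Option ℂ) :
    IsEmpty (GenConvWitness C f) := by
  refine ⟨fun W => ?_⟩
  have hβ0 : ∀ n, β n ≠ 0 := fun n h => by linarith [hβ n, norm_eq_zero.2 h]
  have hratio := eventually_ratio_ne hF hF01 hu
  have hC := eventually_ne_zero hrec hβ0 hratio
  have hB := eventually_snd_succ_ne_zero hratio
  obtain ⟨δ, hδ, hsep⟩ := exists_pos_eventually_le_cdist hC hF hF01 hu hB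
  have hcδ : 0 < c * δ := mul_pos hc hδ
  have hkey := eventually_mul_norm_le hrec hβ hδ.le hC hsep
  obtain ⟨k, hk⟩ : ∃ k, F k ≠ 0 := by
    by_contra! h
    exact hF01 ((h 0).trans (h 1).symm)
  obtain rfl := W.eq_some_of_apply_ne_zero hδ hcδ hsep hC hkey hF hu hk
  -- the two images now converge to `F k ≠ 0` without any junk value
  have hr := W.tendsto_norm_div_norm hk hδ hsep (eventually_norm_le_mul_norm hkey hcδ)
  let l := atTop ⊓ 𝓟 {m | F (m + 1) = F (k + 1) ∧ (C (m + 1)).snd ≠ 0}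
  have : l.NeBot := by
    have h := frequently_snd_ne_zero hrec hβ0 hF hB (k + 1)
    rw [← map_add_atTop_eq_nat 1, frequently_map] at h
    exact frequently_iff_neBot.1 h
  have hl : l ≤ atTop := inf_le_left
  have hz := tendsto_cdist_lift_some hu ((tendsto_add_atTop_nat 1).mono_left hl)
    (mem_inf_of_right (mem_principal_self _))
  exact apply_succ_ne_of_periodic hF hF01 k (Option.some.inj (W.eq_some hδ hsep hC
    (j := fun m => m) (tendsto_id.mono_left hl) (hr.mono_left hl) hz).symm)

end TwoLimits

def convVec (A B : ℕ → ℂ) (n : ℕ) : ℂ² := toLp 2 (A n, B n)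

lemma convVec_add_two {a b A B : ℕ → ℂ}
    (hArec : ∀ n, A (n + 2) = b (n + 1) * A (n + 1) + a (n + 1) * A n)
    (hBrec : ∀ n, B (n + 2) = b (n + 1) * B (n + 1) + a (n + 1) * B n) (n : ℕ) :
    convVec A B (n + 2) = b (n + 1) • convVec A B (n + 1) + a (n + 1) • convVec A B n := by
  simp only [convVec, hArec, hBrec, ← toLp_smul, ← toLp_add, Prod.smul_mk, Prod.mk_add_mk,
    smul_eq_mul]

lemma Sval_eq_ratio_moebius (A B : ℕ → ℂ) (n : ℕ) (p : Option ℂ) :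
    Sval (A (n + 1)) (B (n + 1)) (A n) (B n) p =
      ratio (moebius (convVec A B n) (convVec A B (n + 1)) (lift p)) := by
  cases p <;> simp [Sval, ratio, moebius, lift, convVec, add_comm]

lemma nonempty_genConvWitness {A B : ℕ → ℂ} {f : Option ℂ} (h : GenConvTo A B f) :
    Nonempty (GenConvWitness (convVec A B) f) := by
  obtain ⟨v, w, hpos, hv, hw⟩ := h
  have hbdd : IsBoundedUnder (· ≥ ·) atTop (fun n => sph (v n) (w n)) :=
    isBoundedUnder_of_eventually_ge (Eventually.of_forall fun n => by
      rw [sph_eq_cdist]; exact cdist_nonneg _ _)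
  refine ⟨⟨v, w, _, half_pos hpos, ?_, ?_, ?_⟩⟩
  · filter_upwards [eventually_lt_of_lt_liminf (half_lt_self hpos) hbdd] with n hn
    rw [← sph_eq_cdist]; exact hn.le
  · simpa only [Sval_eq_ratio_moebius] using hv
  · simpa only [Sval_eq_ratio_moebius] using hw

lemma tendsto_of_tendsto_even_odd {α : Type*} {g : ℕ → α} {l : Filter α}
    (h₀ : Tendsto (fun n => g (2 * n + 2)) atTop l)
    (h₁ : Tendsto (fun n => g (2 * n + 1)) atTop l) : Tendsto g atTop l := by
  intro s hs
  obtain ⟨N₀, hN₀⟩ := eventually_atTop.1 (h₀ hs)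
  obtain ⟨N₁, hN₁⟩ := eventually_atTop.1 (h₁ hs)
  refine eventually_atTop.2 ⟨2 * (N₀ + N₁) + 2, fun m hm => ?_⟩
  obtain ⟨k, rfl | rfl⟩ := Nat.even_or_odd' m
  · simpa [show 2 * (k - 1) + 2 = 2 * k by omega] using hN₀ (k - 1) (by omega)
  · exact hN₁ k (by omega)

end GenConv

open GenConv

theorem stmt14_general (a b : ℕ → ℂ) (A B : ℕ → ℂ)
    (hArec : ∀ n : ℕ, A (n + 2) = b (n + 1) * A (n + 1) + a (n + 1) * A n)
    (hBrec : ∀ n : ℕ, B (n + 2) = b (n + 1) * B (n + 1) + a (n + 1) * B n)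
    (f₁ f₂ : ℂ)
    (hodd : Tendsto (fun n => A (2 * n + 2) / B (2 * n + 2)) atTop (nhds f₁))
    (heven : Tendsto (fun n => A (2 * n + 1) / B (2 * n + 1)) atTop (nhds f₂))
    (hne : f₁ ≠ f₂)
    (c₁ c₂ : ℝ) (hc₁ : 0 < c₁)
    (hb : ∀ i : ℕ, 1 ≤ i → c₁ ≤ ‖b i‖ ∧ ‖b i‖ ≤ c₂) :
    ∀ f : Option ℂ, ¬ GenConvTo A B f := by
  intro f hf
  obtain ⟨W⟩ := nonempty_genConvWitness hf
  have hF : Function.Periodic (fun m => if Even m then f₁ else f₂) 2 := fun m => by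
    simp [Nat.even_add]
  have hu : Tendsto (fun m => ratio (convVec A B m) - if Even m then f₁ else f₂) atTop (𝓝 0) := by
    refine tendsto_of_tendsto_even_odd ?_ ?_
    · simpa [ratio, convVec, Nat.even_add] using hodd.sub_const f₁
    · simpa [ratio, convVec, Nat.even_add] using heven.sub_const f₂
  exact (isEmpty_genConvWitness (β := fun n => b (n + 1)) (α := fun n => a (n + 1))
    (convVec_add_two hArec hBrec) hc₁ (fun n => (hb (n + 1) (by omega)).1) hF (by simpa using hne)
    hu f).false W

/-- If the odd and even classical convergents of `b_0 + K(a_n/b_n)` tend to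
different limits, the `b_i` are bounded above and below and the ratios
`|a_{2i+1}/a_{2i}|` are bounded, then the continued fraction does not converge
generally. -/
theorem stmt14 (a b : ℕ → ℂ) (A B : ℕ → ℂ)
    (hA0 : A 0 = 1) (hB0 : B 0 = 0) (hA1 : A 1 = b 0) (hB1 : B 1 = 1)
    (hArec : ∀ n : ℕ, A (n + 2) = b (n + 1) * A (n + 1) + a (n + 1) * A n)
    (hBrec : ∀ n : ℕ, B (n + 2) = b (n + 1) * B (n + 1) + a (n + 1) * B n)
    (f₁ f₂ : ℂ)
    (hodd : Tendsto (fun n => A (2 * n + 2) / B (2 * n + 2)) atTop (nhds f₁))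
    (heven : Tendsto (fun n => A (2 * n + 1) / B (2 * n + 1)) atTop (nhds f₂))
    (hne : f₁ ≠ f₂)
    (c₁ c₂ c₃ : ℝ) (hc₁ : 0 < c₁) (hc₂ : 0 < c₂) (hc₃ : 0 < c₃)
    (hb : ∀ i : ℕ, 1 ≤ i → c₁ ≤ ‖b i‖ ∧ ‖b i‖ ≤ c₂)
    (hab : ∀ i : ℕ, 1 ≤ i → ‖a (2 * i + 1) / a (2 * i)‖ ≤ c₃) :
    ∀ f : Option ℂ, ¬ GenConvTo A B f :=
  stmt14_general a b A B hArec hBrec f₁ f₂ hodd heven hne c₁ c₂ hc₁ hb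
end

section
/- Let B_n satisfy B_n = b_n B_{n-1} + a_n B_{n-2} with b_n, a_n ∈ ℂ, and suppose there exist constants c_1, c_2, c_3 > 0 with c_1 ≤ |b_i| ≤ c_2 and |a_{2i+1}/a_{2i}| ≤ c_3 for all i ≥ 1. Set r_n = B_n/B_{n-1} (assuming B_{n-1} ≠ 0 for all large n). Then it is impossible that simultaneously |r_{2n}| → ∞ and |r_{2n+1}| → 0 as n → ∞. -/
open Filter Topology

/-! Writing `r_n = B_n / B_{n-1}`, the recurrence gives `a_{2n} = r_{2n-1} (r_{2n} - b_{2n})` and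
`a_{2n+1} = r_{2n} (r_{2n+1} - b_{2n+1})`. Dividing the bound `|a_{2n+1}| ≤ c₃ |a_{2n}|` by
`|r_{2n}|` yields `c₁ - |r_{2n+1}| ≤ c₃ |r_{2n-1}| (1 + c₂ / |r_{2n}|)`, whose right side tends to `0`
if `|r_{2n}| → ∞` and `|r_{2n+1}| → 0`, while the left side tends to `c₁ > 0`. -/

theorem eq_div_mul_div_sub_of_eq_mul_add_mul {K : Type*} [Field K] {a b x y z : K}
    (hz : z = b * y + a * x) (hx : x ≠ 0) (hy : y ≠ 0) :
    a = y / x * (z / y - b) := by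
  rw [hz]
  field_simp
  ring

theorem sub_norm_le_of_norm_div_le {K : Type*} [NormedField K]
    {r₁ r₂ r₃ a₂ a₃ b₂ b₃ : K} {c₁ c₂ c₃ : ℝ}
    (hr₁ : r₁ ≠ 0) (hr₂ : c₂ < ‖r₂‖) (hb₂ : ‖b₂‖ ≤ c₂) (hb₃ : c₁ ≤ ‖b₃‖)
    (ha : ‖a₃ / a₂‖ ≤ c₃) (ha₂ : a₂ = r₁ * (r₂ - b₂)) (ha₃ : a₃ = r₂ * (r₃ - b₃)) :
    c₁ - ‖r₃‖ ≤ c₃ * ‖r₁‖ * (1 + c₂ / ‖r₂‖) := by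
  have hr₂_pos : 0 < ‖r₂‖ := (norm_nonneg b₂).trans_lt (hb₂.trans_lt hr₂)
  have hr₂b₂ : 0 < ‖r₂ - b₂‖ := by linarith [norm_sub_norm_le r₂ b₂]
  have ha₂_pos : 0 < ‖a₂‖ := by
    rw [ha₂, norm_mul]
    exact mul_pos (norm_pos_iff.mpr hr₁) hr₂b₂
  have hc₃ : 0 ≤ c₃ := (norm_nonneg _).trans ha
  rw [norm_div, div_le_iff₀ ha₂_pos] at ha
  have lower : ‖r₂‖ * (c₁ - ‖r₃‖) ≤ ‖a₃‖ := by
    rw [ha₃, norm_mul]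
    gcongr
    linarith [norm_sub_norm_le b₃ r₃, norm_sub_rev b₃ r₃]
  have upper : ‖a₃‖ ≤ c₃ * (‖r₁‖ * (‖r₂‖ + c₂)) :=
    calc ‖a₃‖ ≤ c₃ * ‖a₂‖ := ha
      _ ≤ c₃ * (‖r₁‖ * (‖r₂‖ + c₂)) := by
        rw [ha₂, norm_mul]
        gcongr
        linarith [norm_sub_le r₂ b₂, norm_neg b₂, norm_sub_rev r₂ b₂]
  have hrhs : c₃ * ‖r₁‖ * (1 + c₂ / ‖r₂‖) = c₃ * (‖r₁‖ * (‖r₂‖ + c₂)) / ‖r₂‖ := by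
    field_simp
  rw [hrhs, le_div_iff₀ hr₂_pos]
  linarith

theorem false_of_tendsto_of_eventually_sub_le {s t : ℕ → ℝ} {c₁ c₂ c₃ : ℝ} (hc₁ : 0 < c₁)
    (hs : Tendsto s atTop atTop) (ht : Tendsto t atTop (𝓝 0))
    (h : ∀ᶠ k in atTop, c₁ - t (k + 1) ≤ c₃ * t k * (1 + c₂ / s (k + 1))) : False := by
  have hlim : Tendsto (fun k => t (k + 1) + c₃ * t k * (1 + c₂ / s (k + 1))) atTop (𝓝 0) := by
    have hs' := hs.comp (tendsto_add_atTop_nat 1)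
    simpa using (ht.comp (tendsto_add_atTop_nat 1)).add
      ((ht.const_mul c₃).mul (tendsto_const_nhds.add (tendsto_const_nhds.div_atTop hs')))
  have : c₁ ≤ 0 := ge_of_tendsto hlim (h.mono fun k hk => by linarith)
  linarith

theorem stmt15_general (a b : ℕ → ℂ) (B : ℕ → ℂ)
    (hBrec : ∀ n : ℕ, B (n + 2) = b (n + 2) * B (n + 1) + a (n + 2) * B n)
    (hBne : ∃ N : ℕ, ∀ n : ℕ, N ≤ n → B n ≠ 0)
    (c₁ c₂ c₃ : ℝ) (hc₁ : 0 < c₁)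
    (hb : ∀ i : ℕ, 1 ≤ i → c₁ ≤ ‖b i‖ ∧ ‖b i‖ ≤ c₂)
    (hab : ∀ i : ℕ, 1 ≤ i → ‖a (2 * i + 1) / a (2 * i)‖ ≤ c₃) :
    ¬ (Tendsto (fun n => ‖B (2 * n) / B (2 * n - 1)‖) atTop atTop ∧
       Tendsto (fun n => ‖B (2 * n + 1) / B (2 * n)‖) atTop (nhds 0)) := by
  rintro ⟨hs, ht⟩
  obtain ⟨N, hN⟩ := hBne
  refine false_of_tendsto_of_eventually_sub_le (c₂ := c₂) (c₃ := c₃) hc₁ hs ht ?_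
  filter_upwards [eventually_ge_atTop N,
    (hs.comp (tendsto_add_atTop_nat 1)).eventually_gt_atTop c₂] with k hk hsk
  have hB : ∀ j, 2 * k ≤ j → B j ≠ 0 := fun j hj => hN j (by omega)
  exact sub_norm_le_of_norm_div_le (div_ne_zero (hB _ (by omega)) (hB _ le_rfl)) hsk
    (hb (2 * k + 2) (by omega)).2 (hb (2 * k + 3) (by omega)).1 (hab (k + 1) (by omega))
    (eq_div_mul_div_sub_of_eq_mul_add_mul (hBrec (2 * k)) (hB _ le_rfl) (hB _ (by omega)))
    (eq_div_mul_div_sub_of_eq_mul_add_mul (hBrec (2 * k + 1)) (hB _ (by omega)) (hB _ (by omega)))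

/-- With `B_n = b_n B_{n-1} + a_n B_{n-2}`, `c₁ ≤ |b_i| ≤ c₂` and
`|a_{2i+1}/a_{2i}| ≤ c₃`, setting `r_n = B_n/B_{n-1}`, it is impossible that
`|r_{2n}| → ∞` and `|r_{2n+1}| → 0` simultaneously. -/
theorem stmt15 (a b : ℕ → ℂ) (B : ℕ → ℂ)
    (hBrec : ∀ n : ℕ, B (n + 2) = b (n + 2) * B (n + 1) + a (n + 2) * B n)
    (hBne : ∃ N : ℕ, ∀ n : ℕ, N ≤ n → B n ≠ 0)
    (c₁ c₂ c₃ : ℝ) (hc₁ : 0 < c₁) (hc₂ : 0 < c₂) (hc₃ : 0 < c₃)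
    (hb : ∀ i : ℕ, 1 ≤ i → c₁ ≤ ‖b i‖ ∧ ‖b i‖ ≤ c₂)
    (hab : ∀ i : ℕ, 1 ≤ i → ‖a (2 * i + 1) / a (2 * i)‖ ≤ c₃) :
    ¬ (Tendsto (fun n => ‖B (2 * n) / B (2 * n - 1)‖) atTop atTop ∧
       Tendsto (fun n => ‖B (2 * n + 1) / B (2 * n)‖) atTop (nhds 0)) :=
  stmt15_general a b B hBrec hBne c₁ c₂ c₃ hc₁ hb hab
end

section
/- Let x be a primitive m-th root of unity with 5 | m, and let P_n(x), Q_n(x) be the numerator and denominator convergents of the continued fraction 1 + x/(1 + x²/(1 + x³/(1+...))). Given Schur's identities P_{qm+r} = P_r · P_{m-1}^q and Q_{qm+r} = Q_r · Q_{m-2}^q for 0 ≤ r < m, with P_{m-1} = -x^{2m/5} - x^{-2m/5} and Q_{m-2} = -x^{m/5} - x^{-m/5}, the continued fraction converges generally: to 0 if |P_{m-1}/Q_{m-2}| < 1, and to ∞ if |P_{m-1}/Q_{m-2}| > 1. -/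
open Filter

/-
The Schur identities say that, with period `m`, the numerators and denominators are multiplied
by `α = P_{m-1}` and `β = Q_{m-2}` respectively. Hence for every `c ∈ ℂ`,
`S_n(c) = g_c(n mod m) · (α/β)^⌊n/m⌋` where `g_c(r) = (P_{r+1} + c P_r)/(Q_{r+1} + c Q_r)`.
The determinant formula shows that `(P_r, P_{r+1})` and `(Q_r, Q_{r+1})` never vanish together,
so for all but finitely many `c` the numerators and denominators of the `g_c(r)`, `r < m`, are
all nonzero. For two such distinct `c` the sequences `S_n(c)` both tend to `0` or both to `∞`
according as `|α/β| < 1` or `> 1`.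
-/

open Topology

lemma genConvTo_of_tendstoSphere {A B : ℕ → ℂ} {f : Option ℂ} {c₁ c₂ : ℂ} (hne : c₁ ≠ c₂)
    (h₁ : TendstoSphere (fun n => Sval (A (n + 1)) (B (n + 1)) (A n) (B n) (some c₁)) f)
    (h₂ : TendstoSphere (fun n => Sval (A (n + 1)) (B (n + 1)) (A n) (B n) (some c₂)) f) :
    GenConvTo A B f := by
  refine ⟨fun _ => some c₁, fun _ => some c₂, ?_, h₁, h₂⟩
  rw [liminf_const]
  exact div_pos (norm_pos_iff.2 (sub_ne_zero.2 hne.symm)) (by positivity)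

/-- Schur's identities with period `m` and multiplier `α`. -/
def IsQuasiPeriodic {R : Type*} [Monoid R] (A : ℕ → R) (m : ℕ) (α : R) : Prop :=
  ∀ q r : ℕ, r < m → A (q * m + r) = A r * α ^ q

namespace IsQuasiPeriodic

variable {R : Type*} [CommSemiring R] {A : ℕ → R} {m : ℕ} {α : R}

lemma apply_eq (hA : IsQuasiPeriodic A m α) (hm : 0 < m) (n : ℕ) :
    A n = A (n % m) * α ^ (n / m) := by
  conv_lhs => rw [← Nat.div_add_mod' n m]
  exact hA _ _ (Nat.mod_lt _ hm)

lemma apply_succ_eq (hA : IsQuasiPeriodic A m α) (hm : 0 < m) (hA0 : A 0 = 1) (n : ℕ) :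
    A (n + 1) = A (n % m + 1) * α ^ (n / m) := by
  have hn := Nat.div_add_mod' n m
  rcases Nat.lt_or_ge (n % m + 1) m with hlt | hge
  · rw [show n + 1 = n / m * m + (n % m + 1) by omega]
    exact hA _ _ hlt
  · have heq : n % m + 1 = m := by have := Nat.mod_lt n hm; omega
    have hAm : A m = α := by simpa [hA0] using hA 1 0 hm
    rw [show n + 1 = (n / m + 1) * m + 0 by rw [add_mul]; omega, hA _ _ hm, heq, hAm, hA0,
      pow_succ]
    ring

lemma add_mul_eq (hA : IsQuasiPeriodic A m α) (hm : 0 < m) (hA0 : A 0 = 1) (c : R) (n : ℕ) :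
    A (n + 1) + c * A n = (A (n % m + 1) + c * A (n % m)) * α ^ (n / m) := by
  rw [hA.apply_succ_eq hm hA0, hA.apply_eq hm n]
  ring

end IsQuasiPeriodic

lemma sval_some_eq_mul_pow {A B : ℕ → ℂ} {m : ℕ} {α β : ℂ}
    (hA : IsQuasiPeriodic A m α) (hB : IsQuasiPeriodic B m β) (hm : 0 < m)
    (hA0 : A 0 = 1) (hB0 : B 0 = 1) (c : ℂ) (n : ℕ) :
    Sval (A (n + 1)) (B (n + 1)) (A n) (B n) (some c)
      = (A (n % m + 1) + c * A (n % m)) / (B (n % m + 1) + c * B (n % m))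
        * (α / β) ^ (n / m) := by
  rw [Sval, hA.add_mul_eq hm hA0, hB.add_mul_eq hm hB0, div_pow, mul_div_mul_comm]

lemma det_ne_zero_of_recurrence {R : Type*} [CommRing R] [NoZeroDivisors R] {A B a : ℕ → R}
    (hA : ∀ n, A (n + 2) = A (n + 1) + a n * A n)
    (hB : ∀ n, B (n + 2) = B (n + 1) + a n * B n) (ha : ∀ n, a n ≠ 0)
    (h0 : A 1 * B 0 - A 0 * B 1 ≠ 0) (n : ℕ) : A (n + 1) * B n - A n * B (n + 1) ≠ 0 := by
  induction n with
  | zero => exact h0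
  | succ k ih =>
    have hstep : A (k + 2) * B (k + 1) - A (k + 1) * B (k + 2)
        = -a k * (A (k + 1) * B k - A k * B (k + 1)) := by
      rw [hA, hB]; ring
    rw [hstep]
    exact mul_ne_zero (neg_ne_zero.2 (ha k)) ih

lemma ne_zero_or_succ_ne_zero_of_det_ne_zero {R : Type*} [CommRing R] {A B : ℕ → R}
    (hdet : ∀ n, A (n + 1) * B n - A n * B (n + 1) ≠ 0) :
    (∀ n, A n ≠ 0 ∨ A (n + 1) ≠ 0) ∧ (∀ n, B n ≠ 0 ∨ B (n + 1) ≠ 0) := by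
  refine ⟨fun n => ?_, fun n => ?_⟩ <;>
  · by_contra! h
    exact hdet n (by simp [h.1, h.2])

lemma finite_setOf_exists_add_mul_eq_zero {K : Type*} [Field K] {A : ℕ → K}
    (hA : ∀ n, A n ≠ 0 ∨ A (n + 1) ≠ 0) (m : ℕ) :
    {c : K | ∃ r < m, A (r + 1) + c * A r = 0}.Finite := by
  refine ((Set.finite_lt_nat m).biUnion fun r _ => Set.Subsingleton.finite ?_).subset
    fun c ⟨r, hr, hc⟩ => Set.mem_biUnion hr hc
  intro c (hc : A (r + 1) + c * A r = 0) d (hd : A (r + 1) + d * A r = 0)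
  have hsub : (c - d) * A r = 0 := by linear_combination hc - hd
  rcases mul_eq_zero.1 hsub with h | h
  · exact sub_eq_zero.1 h
  · rw [h, mul_zero, add_zero] at hc
    exact ((hA r).elim (· h) (· hc)).elim

lemma tendsto_mul_pow_div_nhds_zero {𝕜 : Type*} [NormedField 𝕜] (f : ℕ → 𝕜) {ρ : 𝕜}
    (hρ : ‖ρ‖ < 1) {m : ℕ} (hm : 0 < m) :
    Tendsto (fun n => f (n % m) * ρ ^ (n / m)) atTop (𝓝 0) := by
  have hbdd : ∀ n, ‖f (n % m)‖ ≤ ∑ r ∈ Finset.range m, ‖f r‖ := fun n =>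
    Finset.single_le_sum (fun r _ => norm_nonneg (f r)) (Finset.mem_range.2 (Nat.mod_lt n hm))
  simp_rw [mul_comm (f _)]
  exact ((tendsto_pow_atTop_nhds_zero_of_norm_lt_one hρ).comp
    (Nat.tendsto_div_const_atTop hm.ne')).zero_mul_isBoundedUnder_le
    (isBoundedUnder_of ⟨_, hbdd⟩)

lemma tendsto_norm_mul_pow_div_atTop {𝕜 : Type*} [NormedField 𝕜] {f : ℕ → 𝕜} {ρ : 𝕜}
    (hρ : 1 < ‖ρ‖) {m : ℕ} (hm : 0 < m) (hf : ∀ r < m, f r ≠ 0) :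
    Tendsto (fun n => ‖f (n % m) * ρ ^ (n / m)‖) atTop atTop := by
  obtain ⟨r₀, hr₀, hmin⟩ := (Finset.range m).exists_min_image (fun r => ‖f r‖)
    ⟨0, Finset.mem_range.2 hm⟩
  have hpos : 0 < ‖f r₀‖ := norm_pos_iff.2 (hf r₀ (Finset.mem_range.1 hr₀))
  refine tendsto_atTop_mono (fun n => ?_)
    (((tendsto_pow_atTop_atTop_of_one_lt hρ).comp
      (Nat.tendsto_div_const_atTop hm.ne')).const_mul_atTop hpos)
  rw [norm_mul, norm_pow]
  exact mul_le_mul_of_nonneg_right (hmin _ (Finset.mem_range.2 (Nat.mod_lt n hm)))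
    (pow_nonneg (norm_nonneg ρ) _)

theorem stmt16_general (m : ℕ) (hm : 0 < m) (x : ℂ)
    (hprim : IsPrimitiveRoot x m) (P Q : ℕ → ℂ)
    (hP0 : P 0 = 1) (hP1 : P 1 = 1 + x) (hQ0 : Q 0 = 1) (hQ1 : Q 1 = 1)
    (hPrec : ∀ n : ℕ, P (n + 2) = P (n + 1) + x ^ (n + 2) * P n)
    (hQrec : ∀ n : ℕ, Q (n + 2) = Q (n + 1) + x ^ (n + 2) * Q n)
    (hPschur : ∀ q r : ℕ, r < m → P (q * m + r) = P r * P (m - 1) ^ q)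
    (hQschur : ∀ q r : ℕ, r < m → Q (q * m + r) = Q r * Q (m - 2) ^ q) :
    (‖P (m - 1) / Q (m - 2)‖ < 1 → GenConvTo P Q (some 0)) ∧
    (1 < ‖P (m - 1) / Q (m - 2)‖ → GenConvTo P Q none) := by
  have hx : x ≠ 0 := hprim.ne_zero hm.ne'
  obtain ⟨hP, hQ⟩ := ne_zero_or_succ_ne_zero_of_det_ne_zero <|
    det_ne_zero_of_recurrence hPrec hQrec (fun n => pow_ne_zero (n + 2) hx)
      (by simp [hP0, hP1, hQ0, hQ1, hx])
  obtain ⟨c₁, hc₁, c₂, hc₂, hne⟩ := ((finite_setOf_exists_add_mul_eq_zero hP m).union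
    (finite_setOf_exists_add_mul_eq_zero hQ m)).infinite_compl.nontrivial
  have hlim : ∀ c ∈ ({c | ∃ r < m, P (r + 1) + c * P r = 0} ∪
      {c | ∃ r < m, Q (r + 1) + c * Q r = 0})ᶜ,
      (‖P (m - 1) / Q (m - 2)‖ < 1 →
        TendstoSphere (fun n => Sval (P (n + 1)) (Q (n + 1)) (P n) (Q n) (some c)) (some 0)) ∧
      (1 < ‖P (m - 1) / Q (m - 2)‖ →
        TendstoSphere (fun n => Sval (P (n + 1)) (Q (n + 1)) (P n) (Q n) (some c)) none) := by
    intro c hc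
    simp only [TendstoSphere, sval_some_eq_mul_pow hPschur hQschur hm hP0 hQ0]
    let g r := (P (r + 1) + c * P r) / (Q (r + 1) + c * Q r)
    refine ⟨fun hρ => tendsto_mul_pow_div_nhds_zero g hρ hm,
      fun hρ => tendsto_norm_mul_pow_div_atTop (f := g) hρ hm fun r hr => div_ne_zero ?_ ?_⟩
    · exact fun h => hc (.inl ⟨r, hr, h⟩)
    · exact fun h => hc (.inr ⟨r, hr, h⟩)
  exact ⟨fun hρ => genConvTo_of_tendstoSphere hne ((hlim c₁ hc₁).1 hρ) ((hlim c₂ hc₂).1 hρ),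
    fun hρ => genConvTo_of_tendstoSphere hne ((hlim c₁ hc₁).2 hρ) ((hlim c₂ hc₂).2 hρ)⟩

/-- For `x` a primitive `m`-th root of unity with `5 ∣ m`, given Schur's
identities, the Rogers–Ramanujan continued fraction converges generally:
to `0` when `|P_{m-1}/Q_{m-2}| < 1` and to `∞` when `|P_{m-1}/Q_{m-2}| > 1`. -/
theorem stmt16 (m : ℕ) (hm : 0 < m) (h5 : 5 ∣ m) (x : ℂ)
    (hprim : IsPrimitiveRoot x m) (P Q : ℕ → ℂ)
    (hP0 : P 0 = 1) (hP1 : P 1 = 1 + x) (hQ0 : Q 0 = 1) (hQ1 : Q 1 = 1)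
    (hPrec : ∀ n : ℕ, P (n + 2) = P (n + 1) + x ^ (n + 2) * P n)
    (hQrec : ∀ n : ℕ, Q (n + 2) = Q (n + 1) + x ^ (n + 2) * Q n)
    (hPschur : ∀ q r : ℕ, r < m → P (q * m + r) = P r * P (m - 1) ^ q)
    (hQschur : ∀ q r : ℕ, r < m → Q (q * m + r) = Q r * Q (m - 2) ^ q)
    (hPm : P (m - 1) = -(x ^ (2 * (m / 5))) - (x ^ (2 * (m / 5)))⁻¹)
    (hQm : Q (m - 2) = -(x ^ (m / 5)) - (x ^ (m / 5))⁻¹) :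
    (‖P (m - 1) / Q (m - 2)‖ < 1 → GenConvTo P Q (some 0)) ∧
    (1 < ‖P (m - 1) / Q (m - 2)‖ → GenConvTo P Q none) :=
  stmt16_general m hm x hprim P Q hP0 hP1 hQ0 hQ1 hPrec hQrec hPschur hQschur
end
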